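/- arXiv:1607.07177 — 9 statements merged into one kernel-verified Lean document; each statement's English description precedes it below -/
import Mathlib

section
/- Let n ≥ 1 and let P be a polynomial over ℂ in the 2n variables X_1,…,X_n,Y_1,…,Y_n with total degree d ≥ 1. Suppose there exist positive integers r and s such that (det M(P))^s = P^r. Then r·d ≤ s·(2n·d − 2n). In particular r/s ≤ 2n − 2n/d, so the rational number λ := 2·(2n − r/s) satisfies λ ≥ 4n/d > 0. -/
open MvPolynomial

private lemma totalDegree_pderiv_le' {σ : Type*} (p : MvPolynomial σ ℂ) (i : σ) :
    (pderiv i p).totalDegree ≤ p.totalDegree - 1 := by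
  classical
  conv_lhs => rw [p.as_sum]
  rw [map_sum]
  apply totalDegree_finsetSum_le
  intro m hm
  rw [pderiv_monomial]
  by_cases h : m i = 0
  · simp [h]
  · refine (totalDegree_monomial_le _ _).trans ?_
    have h1 : (m - Finsupp.single i 1) + Finsupp.single i 1 = m := by
      ext j
      rcases eq_or_ne i j with rfl | hj
      · simp [Finsupp.single_apply]; omega
      · simp [Finsupp.single_apply, hj]
    have h2 : ((m - Finsupp.single i 1).sum fun _ e => e) + 1
        = m.sum fun _ e => e := by
      conv_rhs => rw [← h1]
      rw [Finsupp.sum_add_index' (fun _ => rfl) (fun _ _ _ => rfl)]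
      simp [Finsupp.sum_single_index]
    have h3 := le_totalDegree hm
    have : ((m - Finsupp.single i 1).sum fun _ ↦ id) =
        ((m - Finsupp.single i 1).sum fun _ e => e) := rfl
    omega

private lemma pderiv_eq_zero_of_td_zero {σ : Type*} {p : MvPolynomial σ ℂ} (i : σ)
    (h : p.totalDegree = 0) : pderiv i p = 0 := by
  classical
  apply pderiv_eq_zero_of_notMem_vars
  intro hi
  rw [mem_vars] at hi
  obtain ⟨m, hm, him⟩ := hi
  have := (totalDegree_eq_zero_iff σ p).mp h m hm i
  exact Finsupp.mem_support_iff.mp him this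

private lemma entry_deg {σ : Type*} (p : MvPolynomial σ ℂ) (hd : 1 ≤ p.totalDegree)
    (i j : σ) :
    (p * pderiv i (pderiv j p) - pderiv i p * pderiv j p).totalDegree
      ≤ 2 * p.totalDegree - 2 := by
  set d := p.totalDegree with hdd
  refine (totalDegree_sub _ _).trans (max_le ?_ ?_)
  · by_cases h0 : pderiv i (pderiv j p) = 0
    · simp [h0]
    · have hq0 : (pderiv j p).totalDegree ≠ 0 := fun h =>
        h0 (pderiv_eq_zero_of_td_zero i h)
      have hb1 : (pderiv j p).totalDegree ≤ d - 1 := totalDegree_pderiv_le' p j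
      have hb2 : (pderiv i (pderiv j p)).totalDegree ≤ (pderiv j p).totalDegree - 1 :=
        totalDegree_pderiv_le' _ i
      refine (totalDegree_mul _ _).trans ?_
      omega
  · have hb1 : (pderiv i p).totalDegree ≤ d - 1 := totalDegree_pderiv_le' p i
    have hb2 : (pderiv j p).totalDegree ≤ d - 1 := totalDegree_pderiv_le' p j
    refine (totalDegree_mul _ _).trans ?_
    omega

private lemma totalDegree_pow_eq {σ : Type*} (p : MvPolynomial σ ℂ)
    (hd : 1 ≤ p.totalDegree) (r : ℕ) (hr : 0 < r) :
    (p ^ r).totalDegree = p.totalDegree * r := by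
  classical
  set d := p.totalDegree with hdd
  set Q := homogeneousComponent d p with hQdef
  have hQ : Q.IsHomogeneous d := homogeneousComponent_isHomogeneous d p
  have hpne : p ≠ 0 := by
    intro h; rw [h] at hdd; simp at hdd; omega
  -- Q ≠ 0
  have hQne : Q ≠ 0 := by
    obtain ⟨m, hm, hms⟩ := Finset.exists_mem_eq_sup p.support
      (support_nonempty.mpr hpne) (fun m => m.sum fun _ e => e)
    have hmd : m.degree = d := by
      rw [hdd, totalDegree, hms]; rfl
    intro h
    have := coeff_homogeneousComponent (n := d) (φ := p) m
    rw [← hQdef, h, if_pos hmd] at this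
    exact mem_support_iff.mp hm this.symm
  -- total degree of p - Q
  have hR : (p - Q).totalDegree ≤ d - 1 := by
    rw [totalDegree]
    apply Finset.sup_le
    intro m hm
    have hcm : coeff m (p - Q) ≠ 0 := mem_support_iff.mp hm
    have hcQ := coeff_homogeneousComponent (n := d) (φ := p) m
    have hdeg_eq : m.degree = m.sum fun _ e => e := rfl
    by_cases hmd : m.degree = d
    · exfalso
      rw [if_pos hmd] at hcQ
      have hQc : coeff m Q = coeff m p := hcQ
      rw [coeff_sub, hQc, sub_self] at hcm
      exact hcm rfl
    · have hle : (m.sum fun _ e => e) ≤ d := by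
        by_contra hgt
        have hp0 : coeff m p = 0 := by
          by_contra h
          exact hgt (le_totalDegree (mem_support_iff.mpr h))
        rw [if_neg hmd] at hcQ
        have hQc : coeff m Q = 0 := hcQ
        rw [coeff_sub, hQc, hp0, sub_zero] at hcm
        exact hcm rfl
      rw [← hdeg_eq] at hle ⊢
      omega
  -- total degree of p^r - Q^r
  have hQrd : (Q ^ r).totalDegree = d * r :=
    (hQ.pow r).totalDegree (pow_ne_zero _ hQne)
  have hsum : (p ^ r - Q ^ r).totalDegree ≤ d * r - 1 := by
    have hps : p = Q + (p - Q) := by ring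
    have hexp : p ^ r - Q ^ r
        = ∑ k ∈ Finset.range r, Q ^ k * (p - Q) ^ (r - k) * (r.choose k : MvPolynomial σ ℂ) := by
      conv_lhs => rw [hps, add_pow, Finset.sum_range_succ]
      simp
    rw [hexp]
    apply totalDegree_finsetSum_le
    intro k hk
    rw [Finset.mem_range] at hk
    have hterm : (Q ^ k * (p - Q) ^ (r - k) * (r.choose k : MvPolynomial σ ℂ)).totalDegree
        ≤ k * d + (r - k) * (d - 1) := by
      have h1 : ((r.choose k : ℕ) : MvPolynomial σ ℂ) * (Q ^ k * (p - Q) ^ (r - k))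
          = Q ^ k * (p - Q) ^ (r - k) * (r.choose k : MvPolynomial σ ℂ) := by ring
      rw [← h1, ← nsmul_eq_mul]
      refine (totalDegree_smul_le _ _).trans ?_
      refine (totalDegree_mul _ _).trans ?_
      gcongr
      · exact (totalDegree_pow _ _).trans (by gcongr; exact hQ.totalDegree_le)
      · exact (totalDegree_pow _ _).trans (by gcongr)
    refine hterm.trans ?_
    -- k * d + (r - k) * (d - 1) ≤ d * r - 1
    obtain ⟨m, hmk⟩ : ∃ m, r = k + m := ⟨r - k, by omega⟩
    have hm1 : 1 ≤ m := by omega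
    have hrk : r - k = m := by omega
    apply Nat.le_sub_of_add_le
    calc k * d + (r - k) * (d - 1) + 1 ≤ k * d + m * (d - 1) + m := by
          rw [hrk]; omega
      _ = k * d + m * ((d - 1) + 1) := by ring
      _ = k * d + m * d := by congr 2; omega
      _ = d * r := by rw [hmk]; ring
  have hlt : (p ^ r - Q ^ r).totalDegree < (Q ^ r).totalDegree := by
    rw [hQrd]
    have : 1 ≤ d * r := Nat.one_le_iff_ne_zero.mpr (by positivity)
    omega
  have : p ^ r = Q ^ r + (p ^ r - Q ^ r) := by ring
  rw [this, totalDegree_add_eq_left_of_totalDegree_lt hlt, hQrd]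

private lemma natarith_aux (n d : ℕ) (hd : 1 ≤ d) :
    n * (2 * d - 2) = 2 * n * d - 2 * n := by
  obtain ⟨e, rfl⟩ : ∃ e, d = e + 1 := ⟨d - 1, by omega⟩
  have h3 : 2 * (e + 1) - 2 = 2 * e := by omega
  have h4 : 2 * n * (e + 1) - 2 * n = 2 * n * e := by
    rw [mul_add, mul_one, Nat.add_sub_cancel]
  rw [h3, h4]; ring

/-- The matrix `M(P)` with entries
`M(P)_{αβ} = P·(∂²P/∂X_α∂Y_β) − (∂P/∂X_α)·(∂P/∂Y_β)`, where the variables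
`X_1,…,X_n` are indexed by `Sum.inl` and `Y_1,…,Y_n` by `Sum.inr`. -/
noncomputable def metricMatrix (n : ℕ) (P : MvPolynomial (Fin n ⊕ Fin n) ℂ) :
    Matrix (Fin n) (Fin n) (MvPolynomial (Fin n ⊕ Fin n) ℂ) :=
  fun α β =>
    P * pderiv (Sum.inl α) (pderiv (Sum.inr β) P)
      - pderiv (Sum.inl α) P * pderiv (Sum.inr β) P

theorem einstein_constant_positive_rational (n : ℕ) (hn : 1 ≤ n)
    (P : MvPolynomial (Fin n ⊕ Fin n) ℂ) (hd : 1 ≤ P.totalDegree)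
    (r s : ℕ) (hr : 0 < r) (hs : 0 < s)
    (hMA : (Matrix.det (metricMatrix n P)) ^ s = P ^ r) :
    r * P.totalDegree ≤ s * (2 * n * P.totalDegree - 2 * n) ∧
      2 * (2 * (n : ℚ) - (r : ℚ) / (s : ℚ)) ≥ 4 * (n : ℚ) / (P.totalDegree : ℚ) ∧
      4 * (n : ℚ) / (P.totalDegree : ℚ) > 0 := by
  classical
  set d := P.totalDegree with hdd
  -- degree bound on the determinant
  have hdet : (Matrix.det (metricMatrix n P)).totalDegree ≤ n * (2 * d - 2) := by
    rw [Matrix.det_apply]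
    apply totalDegree_finsetSum_le
    intro σ _
    have h1 : ((Equiv.Perm.sign σ) • ∏ i, metricMatrix n P (σ i) i).totalDegree
        ≤ (∏ i, metricMatrix n P (σ i) i).totalDegree := by
      rw [Units.smul_def]
      exact totalDegree_smul_le _ _
    refine h1.trans ((totalDegree_finset_prod _ _).trans ?_)
    calc ∑ i : Fin n, (metricMatrix n P (σ i) i).totalDegree
        ≤ ∑ _i : Fin n, (2 * d - 2) := by
          apply Finset.sum_le_sum
          intro i _
          exact entry_deg P hd _ _
      _ = n * (2 * d - 2) := by simp [Finset.sum_const, mul_comm]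
  -- main degree inequality
  have hmain : r * d ≤ s * (2 * n * d - 2 * n) := by
    have hPr : (P ^ r).totalDegree = d * r := totalDegree_pow_eq P hd r hr
    have h2 : d * r ≤ s * (n * (2 * d - 2)) := by
      rw [← hPr, ← hMA]
      exact (totalDegree_pow _ _).trans (by gcongr)
    calc r * d = d * r := mul_comm r d
      _ ≤ s * (n * (2 * d - 2)) := h2
      _ = s * (2 * n * d - 2 * n) := by rw [natarith_aux n d hd]
  refine ⟨hmain, ?_, ?_⟩
  · have hnd : 2 * n ≤ 2 * n * d := Nat.le_mul_of_pos_right _ (by omega)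
    have key : (r : ℚ) * d ≤ s * (2 * n * d - 2 * n) := by
      have h := Nat.cast_le (α := ℚ).mpr hmain
      push_cast [Nat.cast_sub hnd] at h
      nlinarith [h]
    have hd' : (0 : ℚ) < d := by exact_mod_cast (by omega : 0 < d)
    have hs' : (0 : ℚ) < s := by exact_mod_cast hs
    have h2 : (r : ℚ) / s * d ≤ 2 * n * d - 2 * n := by
      rw [div_mul_eq_mul_div, div_le_iff₀ hs']
      calc (r : ℚ) * d ≤ s * (2 * n * d - 2 * n) := key
        _ = (2 * n * d - 2 * n) * s := by ring
    rw [ge_iff_le, div_le_iff₀ hd']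
    nlinarith [h2]
  · apply div_pos
    · have : (1 : ℚ) ≤ n := by exact_mod_cast hn
      linarith
    · exact_mod_cast (by omega : 0 < d)
end

section
/- Let f_1,…,f_N be polynomials in n complex variables z_1,…,z_n. Suppose the function z ↦ Σ_{j=1}^N |f_j(z)|² is rotation invariant, i.e., for all θ_1,…,θ_n ∈ ℝ and all z ∈ ℂⁿ one has Σ_{j=1}^N |f_j(e^{iθ_1}z_1,…,e^{iθ_n}z_n)|² = Σ_{j=1}^N |f_j(z)|². Then for any two distinct multi-indices m ≠ m′, Σ_{j=1}^N (coefficient of z^m in f_j)·conj(coefficient of z^{m′} in f_j) = 0, i.e., the coefficient vectors of distinct monomials are pairwise orthogonal in ℂ^N. -/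
open MvPolynomial Finset

private lemma char_sum {K : ℕ} (hK : 0 < K) (e : ℤ) (he : e.natAbs < K) :
    ∑ t : Fin K, Complex.exp (2 * Real.pi * Complex.I * e / K) ^ (t : ℕ)
      = if e = 0 then (K : ℂ) else 0 := by
  have hKC : (K : ℂ) ≠ 0 := Nat.cast_ne_zero.mpr hK.ne'
  rcases eq_or_ne e 0 with h0 | h0
  · simp [h0]
  · rw [if_neg h0]
    set ω : ℂ := Complex.exp (2 * Real.pi * Complex.I * e / K) with hω
    have hωK : ω ^ K = 1 := by
      rw [hω, ← Complex.exp_nat_mul]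
      rw [show (K : ℂ) * (2 * Real.pi * Complex.I * e / K) = e * (2 * Real.pi * Complex.I) by
        field_simp]
      exact Complex.exp_int_mul_two_pi_mul_I e
    have hω1 : ω ≠ 1 := by
      rw [hω]
      intro h1
      rw [Complex.exp_eq_one_iff] at h1
      obtain ⟨k, hk⟩ := h1
      have h2 : (2 * (Real.pi : ℂ) * Complex.I) ≠ 0 := by
        simp [Real.pi_ne_zero, Complex.I_ne_zero]
      have hk' : (2 * (Real.pi : ℂ) * Complex.I) * e
          = (2 * (Real.pi : ℂ) * Complex.I) * (k * K) := by
        field_simp at hk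
        linear_combination (2 * (Real.pi : ℂ) * Complex.I) * hk
      have hc : (e : ℂ) = ((k * K : ℤ) : ℂ) := by
        push_cast
        exact mul_left_cancel₀ h2 hk'
      have heq : e = k * K := by exact_mod_cast hc
      have hk0 : k ≠ 0 := by rintro rfl; simp at heq; exact h0 heq
      have : (K : ℕ) ≤ e.natAbs := by
        rw [heq, Int.natAbs_mul, Int.natAbs_natCast]
        exact Nat.le_mul_of_pos_left K (Int.natAbs_pos.mpr hk0)
      omega
    rw [Fin.sum_univ_eq_sum_range (fun i => ω ^ i) K, geom_sum_eq hω1, hωK]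
    simp

private lemma char_pq {K : ℕ} (hK : 0 < K) (p q : ℕ) (hp : p < K) (hq : q < K) :
    ∑ t : Fin K, Complex.exp (2 * Real.pi * Complex.I / K) ^ ((t : ℕ) * p)
        * (Complex.exp (2 * Real.pi * Complex.I / K))⁻¹ ^ ((t : ℕ) * q)
      = if p = q then (K : ℂ) else 0 := by
  have key : ∀ t : ℕ, Complex.exp (2 * Real.pi * Complex.I / K) ^ (t * p)
      * (Complex.exp (2 * Real.pi * Complex.I / K))⁻¹ ^ (t * q)
      = Complex.exp (2 * Real.pi * Complex.I * ((((p : ℤ) - (q : ℤ)) : ℤ) : ℂ) / K) ^ t := by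
    intro t
    rw [← Complex.exp_neg, ← Complex.exp_nat_mul, ← Complex.exp_nat_mul, ← Complex.exp_add,
      ← Complex.exp_nat_mul]
    congr 1
    push_cast
    ring
  simp_rw [key]
  rw [char_sum hK ((p : ℤ) - q) (by omega)]
  by_cases h : p = q
  · rw [if_pos (by omega : (p : ℤ) - q = 0), if_pos h]
  · rw [if_neg (by omega : ¬ (p : ℤ) - q = 0), if_neg h]

private lemma char_pi {n K : ℕ} (hK : 0 < K) (p q : Fin n → ℕ)
    (hp : ∀ α, p α < K) (hq : ∀ α, q α < K) :
    ∑ t : Fin n → Fin K, ∏ α,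
        (Complex.exp (2 * Real.pi * Complex.I / K) ^ ((t α : ℕ) * p α)
          * (Complex.exp (2 * Real.pi * Complex.I / K))⁻¹ ^ ((t α : ℕ) * q α))
      = if (∀ α, p α = q α) then ((K : ℂ)) ^ n else 0 := by
  classical
  have hps := Fintype.prod_sum (κ := fun _ : Fin n => Fin K)
    (f := fun (α : Fin n) (s : Fin K) =>
      Complex.exp (2 * Real.pi * Complex.I / K) ^ ((s : ℕ) * p α)
        * (Complex.exp (2 * Real.pi * Complex.I / K))⁻¹ ^ ((s : ℕ) * q α))
  rw [← hps]
  have : ∀ α : Fin n, ∑ s : Fin K,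
      (Complex.exp (2 * Real.pi * Complex.I / K) ^ ((s : ℕ) * p α)
        * (Complex.exp (2 * Real.pi * Complex.I / K))⁻¹ ^ ((s : ℕ) * q α))
      = if p α = q α then (K : ℂ) else 0 := fun α => char_pq hK (p α) (q α) (hp α) (hq α)
  rw [Finset.prod_congr rfl fun α _ => this α]
  by_cases h : ∀ α, p α = q α
  · rw [if_pos h]
    simp [h]
  · rw [if_neg h]
    push_neg at h
    obtain ⟨α, hα⟩ := h
    exact Finset.prod_eq_zero (Finset.mem_univ α) (by simp [hα])

private lemma real_vanish {n : ℕ} (p : MvPolynomial (Fin n) ℂ)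
    (h : ∀ x : Fin n → ℝ, eval (fun i => (x i : ℂ)) p = 0) : p = 0 := by
  classical
  set pre : MvPolynomial (Fin n) ℝ := ∑ c ∈ p.support, monomial c (p.coeff c).re with hpre
  set pim : MvPolynomial (Fin n) ℝ := ∑ c ∈ p.support, monomial c (p.coeff c).im with hpim
  have key : ∀ x : Fin n → ℝ,
      ((eval x pre : ℝ) : ℂ) + ((eval x pim : ℝ) : ℂ) * Complex.I
        = eval (fun i => (x i : ℂ)) p := by
    intro x
    rw [hpre, hpim, map_sum, map_sum, eval_eq']
    simp only [eval_monomial, Finsupp.prod_pow]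
    push_cast
    rw [Finset.sum_mul, ← Finset.sum_add_distrib]
    refine Finset.sum_congr rfl fun c _ => ?_
    linear_combination (∏ i, ((x i : ℂ)) ^ c i) * (Complex.re_add_im (coeff c p))
  have h1 : ∀ x : Fin n → ℝ, eval x pre = 0 ∧ eval x pim = 0 := by
    intro x
    have h2 := key x
    rw [h x] at h2
    have hre := congrArg Complex.re h2
    have him := congrArg Complex.im h2
    simp at hre him
    exact ⟨hre, him⟩
  have hpre0 : pre = 0 := by
    apply MvPolynomial.funext (R := ℝ)
    intro x
    simpa using (h1 x).1
  have hpim0 : pim = 0 := by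
    apply MvPolynomial.funext (R := ℝ)
    intro x
    simpa using (h1 x).2
  apply MvPolynomial.ext
  intro d
  have e1 : coeff d pre = (p.coeff d).re := by
    rw [hpre, coeff_sum]
    simp only [coeff_monomial]
    rw [Finset.sum_ite_eq' p.support d (fun c => (p.coeff c).re)]
    by_cases hd : d ∈ p.support
    · rw [if_pos hd]
    · rw [if_neg hd]
      rw [MvPolynomial.notMem_support_iff] at hd
      simp [hd]
  have e2 : coeff d pim = (p.coeff d).im := by
    rw [hpim, coeff_sum]
    simp only [coeff_monomial]
    rw [Finset.sum_ite_eq' p.support d (fun c => (p.coeff c).im)]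
    by_cases hd : d ∈ p.support
    · rw [if_pos hd]
    · rw [if_neg hd]
      rw [MvPolynomial.notMem_support_iff] at hd
      simp [hd]
  rw [hpre0] at e1
  rw [hpim0] at e2
  simp only [coeff_zero] at e1 e2
  rw [coeff_zero]
  exact Complex.ext e1.symm e2.symm

private lemma sum_comm4 {ι₁ ι₂ ι₃ ι₄ M : Type*} [AddCommMonoid M]
    (s₁ : Finset ι₁) (s₂ : Finset ι₂) (s₃ : Finset ι₃) (s₄ : Finset ι₄)
    (g : ι₁ → ι₂ → ι₃ → ι₄ → M) :
    ∑ t ∈ s₁, ∑ j ∈ s₂, ∑ a ∈ s₃, ∑ b ∈ s₄, g t j a b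
      = ∑ j ∈ s₂, ∑ a ∈ s₃, ∑ b ∈ s₄, ∑ t ∈ s₁, g t j a b := by
  rw [Finset.sum_comm]
  refine Finset.sum_congr rfl fun j _ => ?_
  rw [Finset.sum_comm]
  refine Finset.sum_congr rfl fun a _ => ?_
  exact Finset.sum_comm

theorem orthogonal_coeffs_of_rotation_invariant (n N : ℕ)
    (f : Fin N → MvPolynomial (Fin n) ℂ)
    (hrot : ∀ (θ : Fin n → ℝ) (z : Fin n → ℂ),
      ∑ j : Fin N,
          Complex.normSq (eval (fun α => Complex.exp (Complex.I * (θ α)) * z α) (f j))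
        = ∑ j : Fin N, Complex.normSq (eval z (f j))) :
    ∀ m m' : Fin n →₀ ℕ, m ≠ m' →
      ∑ j : Fin N, (coeff m (f j)) * (starRingEnd ℂ) (coeff m' (f j)) = 0 := by
  classical
  intro m m' hmm
  by_cases hm0 : ∀ j, coeff m (f j) = 0
  · simp [hm0]
  by_cases hm'0 : ∀ j, coeff m' (f j) = 0
  · simp [hm'0]
  push_neg at hm0 hm'0
  obtain ⟨j₀, hj₀⟩ := hm0
  obtain ⟨j₁, hj₁⟩ := hm'0
  set S : Finset (Fin n →₀ ℕ) := Finset.univ.biUnion (fun j => (f j).support) with hS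
  have hSsub : ∀ j, (f j).support ⊆ S := by
    intro j
    rw [hS]
    exact Finset.subset_biUnion_of_mem (fun j => (f j).support) (Finset.mem_univ j)
  have hmS : m ∈ S := hSsub j₀ (mem_support_iff.mpr hj₀)
  have hm'S : m' ∈ S := hSsub j₁ (mem_support_iff.mpr hj₁)
  set D : ℕ := Finset.univ.sup (fun j => (f j).totalDegree) with hD
  have hbound : ∀ a ∈ S, ∀ α, a α ≤ D := by
    intro a ha α
    rw [hS, Finset.mem_biUnion] at ha
    obtain ⟨j, _, haj⟩ := ha
    exact le_trans (monomial_le_degreeOf α haj)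
      (le_trans (degreeOf_le_totalDegree (f j) α)
      (Finset.le_sup (f := fun j => (f j).totalDegree) (Finset.mem_univ j)))
  set K : ℕ := 2 * D + 1 with hK
  have hKpos : 0 < K := by omega
  set ζ : ℂ := Complex.exp (2 * Real.pi * Complex.I / K) with hζ
  -- evaluation expanded over a common index set S
  have hevalS : ∀ (w : Fin n → ℂ) (j : Fin N),
      eval w (f j) = ∑ a ∈ S, coeff a (f j) * ∏ α, w α ^ a α := by
    intro w j
    rw [eval_eq']
    refine Finset.sum_subset (hSsub j) ?_
    intro a _ ha
    rw [MvPolynomial.notMem_support_iff] at ha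
    simp [ha]
  have hnorm : ∀ (w : Fin n → ℂ) (j : Fin N),
      ((Complex.normSq (eval w (f j)) : ℝ) : ℂ)
        = ∑ a ∈ S, ∑ b ∈ S, coeff a (f j) * (starRingEnd ℂ) (coeff b (f j))
            * (∏ α, w α ^ a α) * (∏ α, (starRingEnd ℂ) (w α) ^ b α) := by
    intro w j
    rw [← Complex.mul_conj]
    rw [hevalS w j, map_sum, Finset.sum_mul_sum]
    refine Finset.sum_congr rfl fun a _ => Finset.sum_congr rfl fun b _ => ?_
    rw [map_mul, map_prod]
    simp only [map_pow]
    ring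
  -- complexified rotation invariance
  have hrotC : ∀ (θ : Fin n → ℝ) (z : Fin n → ℂ),
      ∑ j : Fin N, ∑ a ∈ S, ∑ b ∈ S,
        (∏ α, Complex.exp (Complex.I * (θ α : ℝ)) ^ a α)
          * (∏ α, (starRingEnd ℂ) (Complex.exp (Complex.I * (θ α : ℝ))) ^ b α)
          * (coeff a (f j) * (starRingEnd ℂ) (coeff b (f j))
              * (∏ α, z α ^ a α) * (∏ α, (starRingEnd ℂ) (z α) ^ b α))
      = ∑ j : Fin N, ∑ a ∈ S, ∑ b ∈ S,
          coeff a (f j) * (starRingEnd ℂ) (coeff b (f j))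
            * (∏ α, z α ^ a α) * (∏ α, (starRingEnd ℂ) (z α) ^ b α) := by
    intro θ z
    have hcast : ∑ j : Fin N,
        ((Complex.normSq (eval (fun α => Complex.exp (Complex.I * (θ α)) * z α) (f j)) : ℝ) : ℂ)
        = ∑ j : Fin N, ((Complex.normSq (eval z (f j)) : ℝ) : ℂ) := by
      have := congrArg (fun r : ℝ => (r : ℂ)) (hrot θ z)
      push_cast at this
      exact this
    have L1 : ∀ j : Fin N,
        ((Complex.normSq (eval (fun α => Complex.exp (Complex.I * (θ α)) * z α) (f j)) : ℝ) : ℂ)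
        = ∑ a ∈ S, ∑ b ∈ S,
          (∏ α, Complex.exp (Complex.I * (θ α : ℝ)) ^ a α)
            * (∏ α, (starRingEnd ℂ) (Complex.exp (Complex.I * (θ α : ℝ))) ^ b α)
            * (coeff a (f j) * (starRingEnd ℂ) (coeff b (f j))
                * (∏ α, z α ^ a α) * (∏ α, (starRingEnd ℂ) (z α) ^ b α)) := by
      intro j
      rw [hnorm _ j]
      refine Finset.sum_congr rfl fun a _ => Finset.sum_congr rfl fun b _ => ?_
      simp only [map_mul, mul_pow, Finset.prod_mul_distrib]
      ring
    calc ∑ j : Fin N, ∑ a ∈ S, ∑ b ∈ S,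
        (∏ α, Complex.exp (Complex.I * (θ α : ℝ)) ^ a α)
          * (∏ α, (starRingEnd ℂ) (Complex.exp (Complex.I * (θ α : ℝ))) ^ b α)
          * (coeff a (f j) * (starRingEnd ℂ) (coeff b (f j))
              * (∏ α, z α ^ a α) * (∏ α, (starRingEnd ℂ) (z α) ^ b α))
        = ∑ j : Fin N,
            ((Complex.normSq (eval (fun α => Complex.exp (Complex.I * (θ α)) * z α) (f j)) : ℝ) : ℂ) :=
          (Finset.sum_congr rfl fun j _ => (L1 j).symm)
      _ = ∑ j : Fin N, ((Complex.normSq (eval z (f j)) : ℝ) : ℂ) := hcast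
      _ = _ := Finset.sum_congr rfl fun j _ => hnorm z j
  -- the key consequence of averaging over the grid of rotations
  have key2 : ∀ z : Fin n → ℂ,
      ∑ j : Fin N, ∑ a ∈ S, ∑ b ∈ S,
        (if (∀ α, a α + m' α = b α + m α) then ((K : ℂ)) ^ n else 0)
          * (coeff a (f j) * (starRingEnd ℂ) (coeff b (f j))
              * (∏ α, z α ^ a α) * (∏ α, (starRingEnd ℂ) (z α) ^ b α)) = 0 := by
    intro z
    have hconj : (starRingEnd ℂ) ζ = ζ⁻¹ := by
      rw [hζ, ← Complex.exp_conj, ← Complex.exp_neg]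
      congr 1
      simp only [map_div₀, map_mul, Complex.conj_I, Complex.conj_ofReal, map_ofNat, map_natCast]
      ring
    have hsum : ∀ t : Fin n → Fin K,
        ∑ j : Fin N, ∑ a ∈ S, ∑ b ∈ S,
          (∏ α, ζ ^ ((t α : ℕ) * (a α + m' α)) * ζ⁻¹ ^ ((t α : ℕ) * (b α + m α)))
            * (coeff a (f j) * (starRingEnd ℂ) (coeff b (f j))
                * (∏ α, z α ^ a α) * (∏ α, (starRingEnd ℂ) (z α) ^ b α))
        = (∏ α, ζ ^ ((t α : ℕ) * m' α) * ζ⁻¹ ^ ((t α : ℕ) * m α))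
            * (∑ j : Fin N, ∑ a ∈ S, ∑ b ∈ S,
              coeff a (f j) * (starRingEnd ℂ) (coeff b (f j))
                * (∏ α, z α ^ a α) * (∏ α, (starRingEnd ℂ) (z α) ^ b α)) := by
      intro t
      have hφ : ∀ α : Fin n,
          Complex.exp (Complex.I * ((2 * Real.pi * ((t α : ℕ) : ℝ) / (K : ℝ) : ℝ) : ℂ))
            = ζ ^ (t α : ℕ) := by
        intro α
        rw [hζ, ← Complex.exp_nat_mul]
        congr 1
        push_cast
        ring
      have H := hrotC (fun α => 2 * Real.pi * ((t α : ℕ) : ℝ) / (K : ℝ)) z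
      simp only [hφ] at H
      have hterm : ∀ a b : Fin n →₀ ℕ,
          (∏ α, ζ ^ ((t α : ℕ) * (a α + m' α)) * ζ⁻¹ ^ ((t α : ℕ) * (b α + m α)))
          = (∏ α, ζ ^ ((t α : ℕ) * m' α) * ζ⁻¹ ^ ((t α : ℕ) * m α))
            * ((∏ α, (ζ ^ (t α : ℕ)) ^ a α)
              * (∏ α, ((starRingEnd ℂ) (ζ ^ (t α : ℕ))) ^ b α)) := by
        intro a b
        simp only [map_pow, hconj]
        rw [← Finset.prod_mul_distrib, ← Finset.prod_mul_distrib]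
        refine Finset.prod_congr rfl fun α _ => ?_
        rw [← pow_mul, ← pow_mul, Nat.mul_add, Nat.mul_add, pow_add, pow_add]
        ring
      calc ∑ j : Fin N, ∑ a ∈ S, ∑ b ∈ S,
            (∏ α, ζ ^ ((t α : ℕ) * (a α + m' α)) * ζ⁻¹ ^ ((t α : ℕ) * (b α + m α)))
              * (coeff a (f j) * (starRingEnd ℂ) (coeff b (f j))
                  * (∏ α, z α ^ a α) * (∏ α, (starRingEnd ℂ) (z α) ^ b α))
          = ∑ j : Fin N, ∑ a ∈ S, ∑ b ∈ S,
              (∏ α, ζ ^ ((t α : ℕ) * m' α) * ζ⁻¹ ^ ((t α : ℕ) * m α))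
                * ((∏ α, (ζ ^ (t α : ℕ)) ^ a α)
                    * (∏ α, ((starRingEnd ℂ) (ζ ^ (t α : ℕ))) ^ b α)
                  * (coeff a (f j) * (starRingEnd ℂ) (coeff b (f j))
                      * (∏ α, z α ^ a α) * (∏ α, (starRingEnd ℂ) (z α) ^ b α))) := by
            refine Finset.sum_congr rfl fun j _ => Finset.sum_congr rfl fun a _ =>
              Finset.sum_congr rfl fun b _ => ?_
            rw [hterm a b]
            ring
        _ = (∏ α, ζ ^ ((t α : ℕ) * m' α) * ζ⁻¹ ^ ((t α : ℕ) * m α))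
              * (∑ j : Fin N, ∑ a ∈ S, ∑ b ∈ S,
                (∏ α, (ζ ^ (t α : ℕ)) ^ a α)
                  * (∏ α, ((starRingEnd ℂ) (ζ ^ (t α : ℕ))) ^ b α)
                  * (coeff a (f j) * (starRingEnd ℂ) (coeff b (f j))
                      * (∏ α, z α ^ a α) * (∏ α, (starRingEnd ℂ) (z α) ^ b α))) := by
            simp only [Finset.mul_sum]
        _ = _ := by rw [H]
    -- now sum over the grid
    have hchi : ∑ t : Fin n → Fin K, ∏ α, ζ ^ ((t α : ℕ) * m' α) * ζ⁻¹ ^ ((t α : ℕ) * m α) = 0 := by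
      have := char_pi (n := n) hKpos (fun α => m' α) (fun α => m α)
        (fun α => by have h1 := hbound m' hm'S α; show m' α < K; omega)
        (fun α => by have h1 := hbound m hmS α; show m α < K; omega)
      rw [← hζ] at this
      rw [this, if_neg]
      intro hall
      exact hmm (Finsupp.ext fun α => (hall α).symm)
    have hL : ∀ a ∈ S, ∀ b ∈ S,
        (∑ t : Fin n → Fin K,
            ∏ α, ζ ^ ((t α : ℕ) * (a α + m' α)) * ζ⁻¹ ^ ((t α : ℕ) * (b α + m α)))
          = (if (∀ α, a α + m' α = b α + m α) then ((K : ℂ)) ^ n else 0) := by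
      intro a ha b hb
      have := char_pi (n := n) hKpos (fun α => a α + m' α) (fun α => b α + m α)
        (fun α => by
          have h1 := hbound a ha α; have h2 := hbound m' hm'S α
          show a α + m' α < K; omega)
        (fun α => by
          have h1 := hbound b hb α; have h2 := hbound m hmS α
          show b α + m α < K; omega)
      rw [← hζ] at this
      exact this
    calc ∑ j : Fin N, ∑ a ∈ S, ∑ b ∈ S,
        (if (∀ α, a α + m' α = b α + m α) then ((K : ℂ)) ^ n else 0)
          * (coeff a (f j) * (starRingEnd ℂ) (coeff b (f j))
              * (∏ α, z α ^ a α) * (∏ α, (starRingEnd ℂ) (z α) ^ b α))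
        = ∑ j : Fin N, ∑ a ∈ S, ∑ b ∈ S,
            (∑ t : Fin n → Fin K,
              ∏ α, ζ ^ ((t α : ℕ) * (a α + m' α)) * ζ⁻¹ ^ ((t α : ℕ) * (b α + m α)))
              * (coeff a (f j) * (starRingEnd ℂ) (coeff b (f j))
                  * (∏ α, z α ^ a α) * (∏ α, (starRingEnd ℂ) (z α) ^ b α)) := by
          refine Finset.sum_congr rfl fun j _ => Finset.sum_congr rfl fun a ha =>
            Finset.sum_congr rfl fun b hb => ?_
          rw [hL a ha b hb]
      _ = ∑ j : Fin N, ∑ a ∈ S, ∑ b ∈ S, ∑ t : Fin n → Fin K,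
            (∏ α, ζ ^ ((t α : ℕ) * (a α + m' α)) * ζ⁻¹ ^ ((t α : ℕ) * (b α + m α)))
              * (coeff a (f j) * (starRingEnd ℂ) (coeff b (f j))
                  * (∏ α, z α ^ a α) * (∏ α, (starRingEnd ℂ) (z α) ^ b α)) := by
          simp only [Finset.sum_mul]
      _ = ∑ t : Fin n → Fin K, ∑ j : Fin N, ∑ a ∈ S, ∑ b ∈ S,
            (∏ α, ζ ^ ((t α : ℕ) * (a α + m' α)) * ζ⁻¹ ^ ((t α : ℕ) * (b α + m α)))
              * (coeff a (f j) * (starRingEnd ℂ) (coeff b (f j))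
                  * (∏ α, z α ^ a α) * (∏ α, (starRingEnd ℂ) (z α) ^ b α)) :=
          (sum_comm4 _ _ _ _ _).symm
      _ = ∑ t : Fin n → Fin K,
            (∏ α, ζ ^ ((t α : ℕ) * m' α) * ζ⁻¹ ^ ((t α : ℕ) * m α))
              * (∑ j : Fin N, ∑ a ∈ S, ∑ b ∈ S,
                coeff a (f j) * (starRingEnd ℂ) (coeff b (f j))
                  * (∏ α, z α ^ a α) * (∏ α, (starRingEnd ℂ) (z α) ^ b α)) :=
          Finset.sum_congr rfl fun t _ => hsum t
      _ = (∑ t : Fin n → Fin K,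
            ∏ α, ζ ^ ((t α : ℕ) * m' α) * ζ⁻¹ ^ ((t α : ℕ) * m α))
              * (∑ j : Fin N, ∑ a ∈ S, ∑ b ∈ S,
                coeff a (f j) * (starRingEnd ℂ) (coeff b (f j))
                  * (∏ α, z α ^ a α) * (∏ α, (starRingEnd ℂ) (z α) ^ b α)) :=
          (Finset.sum_mul _ _ _).symm
      _ = 0 := by rw [hchi, zero_mul]
  -- build the polynomial Q and conclude
  set Q : MvPolynomial (Fin n) ℂ :=
    ∑ j : Fin N, ∑ a ∈ S, ∑ b ∈ S,
      (if (∀ α, a α + m' α = b α + m α)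
        then monomial (a + b) (coeff a (f j) * (starRingEnd ℂ) (coeff b (f j)))
        else 0) with hQ
  have hKn : ((K : ℂ)) ^ n ≠ 0 := pow_ne_zero _ (Nat.cast_ne_zero.mpr hKpos.ne')
  have hQz : ∀ x : Fin n → ℝ, eval (fun i => (x i : ℂ)) Q = 0 := by
    intro x
    have h2 := key2 (fun i => (x i : ℂ))
    simp only [Complex.conj_ofReal, ite_mul, zero_mul] at h2
    have hev : ((K : ℂ)) ^ n * eval (fun i => ((x i : ℝ) : ℂ)) Q
        = ∑ j : Fin N, ∑ a ∈ S, ∑ b ∈ S,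
          (if (∀ α, a α + m' α = b α + m α)
            then ((K : ℂ)) ^ n
              * ((coeff a (f j) * (starRingEnd ℂ) (coeff b (f j))
                  * ∏ α, ((x α : ℝ) : ℂ) ^ a α) * ∏ α, ((x α : ℝ) : ℂ) ^ b α)
            else 0) := by
      rw [hQ, map_sum, Finset.mul_sum]
      refine Finset.sum_congr rfl fun j _ => ?_
      rw [map_sum, Finset.mul_sum]
      refine Finset.sum_congr rfl fun a _ => ?_
      rw [map_sum, Finset.mul_sum]
      refine Finset.sum_congr rfl fun b _ => ?_
      split_ifs with hc
      · rw [eval_monomial, Finsupp.prod_pow]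
        simp only [Finsupp.add_apply, pow_add, Finset.prod_mul_distrib]
        ring
      · rw [map_zero, mul_zero]
    have h3 : ((K : ℂ)) ^ n * eval (fun i => ((x i : ℝ) : ℂ)) Q = 0 := hev.trans h2
    exact (mul_eq_zero.mp h3).resolve_left hKn
  have hQ0 : Q = 0 := real_vanish Q hQz
  -- extract the coefficient at m + m'
  have hiff : ∀ a b : Fin n →₀ ℕ,
      ((∀ α, a α + m' α = b α + m α) ∧ a + b = m + m') ↔ (a = m ∧ b = m') := by
    intro a b
    constructor
    · rintro ⟨h1, h2⟩
      have h2' : ∀ α, a α + b α = m α + m' α := fun α => by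
        have := DFunLike.congr_fun h2 α
        simpa using this
      constructor
      · exact Finsupp.ext fun α => by have := h1 α; have := h2' α; omega
      · exact Finsupp.ext fun α => by have := h1 α; have := h2' α; omega
    · rintro ⟨rfl, rfl⟩
      exact ⟨fun α => add_comm _ _, rfl⟩
  have hcoeff : coeff (m + m') Q = ∑ j : Fin N, coeff m (f j) * (starRingEnd ℂ) (coeff m' (f j)) := by
    rw [hQ, coeff_sum]
    refine Finset.sum_congr rfl fun j _ => ?_
    rw [coeff_sum]
    have hinner : ∀ a : Fin n →₀ ℕ,
        coeff (m + m') (∑ b ∈ S, (if (∀ α, a α + m' α = b α + m α)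
          then monomial (a + b) (coeff a (f j) * (starRingEnd ℂ) (coeff b (f j)))
          else 0))
        = ∑ b ∈ S, (if (a = m ∧ b = m')
            then coeff a (f j) * (starRingEnd ℂ) (coeff b (f j)) else 0) := by
      intro a
      rw [coeff_sum]
      refine Finset.sum_congr rfl fun b _ => ?_
      by_cases hc2 : a = m ∧ b = m'
      · obtain ⟨rfl, rfl⟩ := hc2
        rw [if_pos (fun α => add_comm (a α) (b α)), coeff_monomial, if_pos rfl,
          if_pos ⟨rfl, rfl⟩]
      · rw [if_neg hc2]
        split_ifs with hc1
        · rw [coeff_monomial, if_neg]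
          intro hab
          exact hc2 ((hiff a b).mp ⟨hc1, hab⟩)
        · rw [coeff_zero]
    rw [Finset.sum_congr rfl fun a _ => hinner a]
    rw [Finset.sum_eq_single m]
    · rw [Finset.sum_eq_single m']
      · rw [if_pos ⟨rfl, rfl⟩]
      · intro b _ hb
        rw [if_neg]
        rintro ⟨_, h⟩
        exact hb h
      · intro h
        exact absurd hm'S h
    · intro a _ ha
      refine Finset.sum_eq_zero fun b _ => ?_
      rw [if_neg]
      rintro ⟨h, _⟩
      exact ha h
    · intro h
      exact absurd hmS h
  rw [← hcoeff, hQ0, coeff_zero]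
end

section
/- Let f_1,…,f_N be polynomials in n complex variables z_1,…,z_n such that the function z ↦ Σ_{j=1}^N |f_j(z)|² is rotation invariant, i.e., for all θ_1,…,θ_n ∈ ℝ and all z ∈ ℂⁿ one has Σ_{j=1}^N |f_j(e^{iθ_1}z_1,…,e^{iθ_n}z_n)|² = Σ_{j=1}^N |f_j(z)|². Then there exists a unitary N×N matrix U over ℂ such that, setting g_j := Σ_{k=1}^N U_{jk}·f_k, each g_j has the form g_j = c_j·z^{m_j} for some real c_j ≥ 0 and some multi-index m_j, where the multi-indices m_j are pairwise distinct on the set of indices j with c_j ≠ 0. -/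
open MvPolynomial
open Complex Finset
theorem zero_of_eval_real : ∀ {n : ℕ} (p : MvPolynomial (Fin n) ℂ),
    (∀ x : Fin n → ℝ, eval (fun i => (x i : ℂ)) p = 0) → p = 0 := by
  intro n
  induction n with
  | zero =>
    intro p h
    obtain ⟨r, rfl⟩ := MvPolynomial.C_surjective (Fin 0) p
    simpa using h finZeroElim
  | succ n ih =>
    intro p h
    apply (finSuccEquiv ℂ n).injective
    rw [map_zero]
    ext i : 1
    rw [Polynomial.coeff_zero]
    apply ih
    intro x
    have hq : (Polynomial.map (eval fun i => (x i : ℂ)) (finSuccEquiv ℂ n p)) = 0 := by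
      apply Polynomial.eq_zero_of_infinite_isRoot
      apply Set.Infinite.mono (s := Set.range (fun t : ℝ => (t : ℂ)))
      · rintro _ ⟨t, rfl⟩
        simp only [Set.mem_setOf_eq, Polynomial.IsRoot]
        rw [← eval_eq_eval_mv_eval' (fun i => (x i : ℂ)) (t : ℂ) p]
        have hfun : (fun a => ((Fin.cons t x : Fin (n+1) → ℝ) a : ℂ))
            = Fin.cons (t : ℂ) (fun a => (x a : ℂ)) := by
          funext a
          refine Fin.cases ?_ ?_ a <;> simp
        rw [← hfun]
        exact h (Fin.cons t x)
      · exact Set.infinite_range_of_injective (fun a b hab => by exact_mod_cast hab)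
    have := congrArg (fun q => Polynomial.coeff q i) hq
    simpa [Polynomial.coeff_map] using this
theorem filter0 (K : ℕ) (a b : ℕ) (ha : a < K) (hb : b < K) :
    ∑ k : Fin K, exp (2 * Real.pi * I * k / K) ^ a
        * (starRingEnd ℂ) (exp (2 * Real.pi * I * k / K) ^ b)
      = if a = b then (K : ℂ) else 0 := by
  have hK : (0:ℕ) < K := lt_of_le_of_lt (Nat.zero_le a) ha
  have hKC : (K : ℂ) ≠ 0 := by exact_mod_cast hK.ne'
  set ζ : ℂ := exp (2 * Real.pi * I * ((a : ℂ) - (b : ℂ)) / K) with hζ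
  have hterm : ∀ k : Fin K,
      exp (2 * Real.pi * I * k / K) ^ a * (starRingEnd ℂ) (exp (2 * Real.pi * I * k / K) ^ b)
        = ζ ^ (k : ℕ) := by
    intro k
    rw [map_pow, ← Complex.exp_conj]
    have hconj : (starRingEnd ℂ) (2 * Real.pi * I * k / K) = -(2 * Real.pi * I * k / K) := by
      simp [map_div₀, map_mul, Complex.conj_I, Complex.conj_ofReal, map_natCast, map_ofNat]
      ring
    rw [hconj, ← Complex.exp_nat_mul, ← Complex.exp_nat_mul, ← Complex.exp_add, hζ,
      ← Complex.exp_nat_mul]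
    congr 1
    field_simp
    ring
  rw [Finset.sum_congr rfl (fun k _ => hterm k)]
  by_cases hab : a = b
  · subst hab
    simp [hζ]
  · rw [if_neg hab]
    have hζ1 : ζ ≠ 1 := by
      intro h1
      rw [hζ, Complex.exp_eq_one_iff] at h1
      obtain ⟨q, hq⟩ := h1
      have h2 : (2 * (Real.pi:ℂ) * I) ≠ 0 := by
        simp [Real.pi_ne_zero, I_ne_zero, Complex.ofReal_ne_zero]
      have hcb : (a:ℂ) - b = q * K := by
        field_simp at hq
        have h3 : (2 * (Real.pi:ℂ) * I) * ((a:ℂ) - b) = (2 * (Real.pi:ℂ) * I) * ((q:ℂ) * K) := by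
          linear_combination (2 * (Real.pi:ℂ) * I) * hq
        exact mul_left_cancel₀ h2 h3
      have hcz : (a:ℤ) - b = q * K := by exact_mod_cast hcb
      have habs : |(a:ℤ) - b| < K := by rw [abs_sub_lt_iff]; omega
      rw [hcz, abs_mul, Int.abs_natCast] at habs
      rcases eq_or_ne q 0 with h0 | h0
      · rw [h0] at hcz; simp at hcz; omega
      · have : (1:ℤ) ≤ |q| := Int.one_le_abs h0
        nlinarith [Int.natCast_pos.mpr hK]
    have hζK : ζ ^ K = 1 := by
      rw [hζ, ← Complex.exp_nat_mul]
      have : (K : ℂ) * (2 * Real.pi * I * ((a:ℂ) - b) / K) = ((a:ℤ) - b) * (2 * Real.pi * I) := by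
        push_cast
        field_simp
      rw [this]
      exact_mod_cast Complex.exp_int_mul_two_pi_mul_I ((a:ℤ) - b)
    rw [Fin.sum_univ_eq_sum_range (fun i => ζ ^ i) K, geom_sum_eq hζ1, hζK]
    simp

theorem filtern (n K : ℕ) (a b : Fin n → ℕ) (ha : ∀ α, a α < K) (hb : ∀ α, b α < K) :
    ∑ k : Fin n → Fin K,
        (∏ α, exp (2 * Real.pi * I * (k α) / K) ^ (a α))
          * (starRingEnd ℂ) (∏ α, exp (2 * Real.pi * I * (k α) / K) ^ (b α))
      = if a = b then ((K : ℂ)) ^ n else 0 := by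
  have : ∀ k : Fin n → Fin K,
      (∏ α, exp (2 * Real.pi * I * (k α) / K) ^ (a α))
          * (starRingEnd ℂ) (∏ α, exp (2 * Real.pi * I * (k α) / K) ^ (b α))
        = ∏ α, (exp (2 * Real.pi * I * (k α) / K) ^ (a α)
            * (starRingEnd ℂ) (exp (2 * Real.pi * I * (k α) / K) ^ (b α))) := by
    intro k
    rw [map_prod, Finset.prod_mul_distrib]
  rw [Finset.sum_congr rfl (fun k _ => this k), ← Fintype.prod_sum
    (fun α (t : Fin K) => exp (2 * Real.pi * I * t / K) ^ (a α)
      * (starRingEnd ℂ) (exp (2 * Real.pi * I * t / K) ^ (b α)))]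
  have := fun α => filter0 K (a α) (b α) (ha α) (hb α)
  rw [Finset.prod_congr rfl (fun α _ => this α)]
  by_cases hab : a = b
  · simp [hab]
  · rw [if_neg hab]
    obtain ⟨α, hα⟩ : ∃ α, a α ≠ b α := by
      by_contra h
      push_neg at h
      exact hab (funext h)
    exact Finset.prod_eq_zero (Finset.mem_univ α) (by rw [if_neg hα])
theorem expand_sum {ι : Type*} (N : ℕ) (T : Finset ι) (a : ι → Fin N → ℂ) (u : ι → ℂ) :
    ∑ j : Fin N, (∑ m ∈ T, a m j * u m) * (starRingEnd ℂ) (∑ m' ∈ T, a m' j * u m')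
      = ∑ m ∈ T, ∑ m' ∈ T, (∑ j : Fin N, a m j * (starRingEnd ℂ) (a m' j))
          * (u m * (starRingEnd ℂ) (u m')) := by
  have step : ∀ j : Fin N,
      (∑ m ∈ T, a m j * u m) * (starRingEnd ℂ) (∑ m' ∈ T, a m' j * u m')
        = ∑ m ∈ T, ∑ m' ∈ T,
            (a m j * (starRingEnd ℂ) (a m' j)) * (u m * (starRingEnd ℂ) (u m')) := by
    intro j
    rw [map_sum, Finset.sum_mul_sum]
    refine Finset.sum_congr rfl fun m _ => Finset.sum_congr rfl fun m' _ => ?_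
    rw [map_mul]
    ring
  rw [Finset.sum_congr rfl fun j _ => step j]
  rw [Finset.sum_comm]
  refine Finset.sum_congr rfl fun m _ => ?_
  rw [Finset.sum_comm]
  refine Finset.sum_congr rfl fun m' _ => ?_
  rw [Finset.sum_mul]

theorem key_orth (n N : ℕ) (f : Fin N → MvPolynomial (Fin n) ℂ)
    (hrot : ∀ (θ : Fin n → ℝ) (z : Fin n → ℂ),
      ∑ j : Fin N,
          Complex.normSq (eval (fun α => Complex.exp (Complex.I * (θ α)) * z α) (f j))
        = ∑ j : Fin N, Complex.normSq (eval z (f j)))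
    (m₀ m₀' : Fin n →₀ ℕ) (hne : m₀ ≠ m₀') :
    ∑ j : Fin N, coeff m₀ (f j) * (starRingEnd ℂ) (coeff m₀' (f j)) = 0 := by
  classical
  set A : (Fin n →₀ ℕ) → Fin N → ℂ := fun m j => coeff m (f j) with hA
  by_cases hz : (∀ j, A m₀ j = 0) ∨ (∀ j, A m₀' j = 0)
  · refine Finset.sum_eq_zero fun j _ => ?_
    rcases hz with h | h
    · rw [show coeff m₀ (f j) = A m₀ j from rfl, h j, zero_mul]
    · rw [show coeff m₀' (f j) = A m₀' j from rfl, h j, map_zero, mul_zero]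
  push_neg at hz
  obtain ⟨⟨j₀, hj₀⟩, ⟨j₁, hj₁⟩⟩ := hz
  set T : Finset (Fin n →₀ ℕ) := Finset.biUnion Finset.univ (fun j => (f j).support) with hT
  have hmem : ∀ m (j : Fin N), A m j ≠ 0 → m ∈ T := fun m j h =>
    Finset.mem_biUnion.2 ⟨j, Finset.mem_univ j, MvPolynomial.mem_support_iff.2 h⟩
  have hm₀T : m₀ ∈ T := hmem _ _ hj₀
  have hm₀'T : m₀' ∈ T := hmem _ _ hj₁
  set D : ℕ := T.sup (fun m => Finset.univ.sup fun α => m α) with hD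
  have hbound : ∀ m ∈ T, ∀ α, m α ≤ D := by
    intro m hm α
    have h1 : m α ≤ Finset.univ.sup (fun α => m α) := Finset.le_sup (Finset.mem_univ α)
    have h2 : Finset.univ.sup (fun α => m α) ≤ D :=
      Finset.le_sup (f := fun m : Fin n →₀ ℕ => Finset.univ.sup fun α => m α) hm
    exact le_trans h1 h2
  set K : ℕ := 2 * D + 1 with hK
  have hKpos : 0 < K := Nat.succ_pos _
  -- eval expansion over T
  have heval : ∀ (w : Fin n → ℂ) (j : Fin N),
      eval w (f j) = ∑ m ∈ T, A m j * ∏ α, w α ^ m α := by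
    intro w j
    rw [MvPolynomial.eval_eq']
    exact Finset.sum_subset (fun m hm => Finset.mem_biUnion.2 ⟨j, Finset.mem_univ j, hm⟩)
      (fun m _ hm => by
        rw [show (f j).coeff m = 0 from MvPolynomial.notMem_support_iff.1 hm, zero_mul])
  set B : (Fin n →₀ ℕ) → (Fin n →₀ ℕ) → ℂ :=
    fun m m' => ∑ j : Fin N, A m j * (starRingEnd ℂ) (A m' j) with hB
  set Z : (Fin n → ℂ) → (Fin n →₀ ℕ) → ℂ := fun z m => ∏ α, z α ^ m α with hZ
  set E : (Fin n → ℝ) → (Fin n →₀ ℕ) → ℂ :=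
    fun θ m => ∏ α, Complex.exp (Complex.I * (θ α : ℂ)) ^ m α with hE
  -- complex form of rotation invariance, fully expanded
  have hexp : ∀ (θ : Fin n → ℝ) (z : Fin n → ℂ),
      ∑ m ∈ T, ∑ m' ∈ T,
          B m m' * ((E θ m * Z z m) * (starRingEnd ℂ) (E θ m' * Z z m'))
        = ∑ m ∈ T, ∑ m' ∈ T, B m m' * (Z z m * (starRingEnd ℂ) (Z z m')) := by
    intro θ z
    have e1 : ∀ j : Fin N,
        eval (fun α => Complex.exp (Complex.I * (θ α : ℂ)) * z α) (f j)
          = ∑ m ∈ T, A m j * (E θ m * Z z m) := by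
      intro j
      rw [heval]
      refine Finset.sum_congr rfl fun m _ => ?_
      simp only [hE, hZ, mul_pow, ← Finset.prod_mul_distrib]
    have e2 : ∀ j : Fin N, eval z (f j) = ∑ m ∈ T, A m j * (Z z m) := heval z
    have hCC :
        ∑ j : Fin N, (∑ m ∈ T, A m j * (E θ m * Z z m))
            * (starRingEnd ℂ) (∑ m' ∈ T, A m' j * (E θ m' * Z z m'))
          = ∑ j : Fin N, (∑ m ∈ T, A m j * (Z z m))
              * (starRingEnd ℂ) (∑ m' ∈ T, A m' j * (Z z m')) := by
      have h1 := hrot θ z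
      have h2 : ∀ j, (∑ m ∈ T, A m j * (E θ m * Z z m))
            * (starRingEnd ℂ) (∑ m' ∈ T, A m' j * (E θ m' * Z z m'))
          = (Complex.normSq (eval (fun α => Complex.exp (Complex.I * (θ α : ℂ)) * z α) (f j)) : ℂ) := by
        intro j
        rw [← e1 j, Complex.mul_conj]
      have h3 : ∀ j, (∑ m ∈ T, A m j * (Z z m))
            * (starRingEnd ℂ) (∑ m' ∈ T, A m' j * (Z z m'))
          = (Complex.normSq (eval z (f j)) : ℂ) := by
        intro j
        rw [← e2 j, Complex.mul_conj]
      rw [Finset.sum_congr rfl fun j _ => h2 j, Finset.sum_congr rfl fun j _ => h3 j]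
      push_cast
      exact_mod_cast congrArg Complex.ofReal h1
    have l := expand_sum N T (fun m j => A m j) (fun m => E θ m * Z z m)
    have r := expand_sum N T (fun m j => A m j) (fun m => Z z m)
    rw [l, r] at hCC
    exact hCC
  -- grid of angles
  set θg : (Fin n → Fin K) → (Fin n → ℝ) := fun k α => 2 * Real.pi * (k α) / K with hθg
  have hEform : ∀ (k : Fin n → Fin K) (m : Fin n →₀ ℕ),
      E (θg k) m = ∏ α, Complex.exp (2 * Real.pi * Complex.I * (k α) / K) ^ m α := by
    intro k m
    refine Finset.prod_congr rfl fun α _ => ?_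
    congr 2
    push_cast [hθg]
    ring
  have filter_appl : ∀ (a b : Fin n →₀ ℕ), (∀ α, a α < K) → (∀ α, b α < K) →
      ∑ k : Fin n → Fin K, E (θg k) a * (starRingEnd ℂ) (E (θg k) b)
        = if a = b then ((K : ℂ)) ^ n else 0 := by
    intro a b hax hbx
    have h := filtern n K (fun α => a α) (fun α => b α) hax hbx
    have hcond : ((fun α => a α) = fun α => b α) ↔ a = b :=
      ⟨fun h => Finsupp.ext (fun α => congrFun h α), fun h => by rw [h]⟩
    rw [Finset.sum_congr rfl (fun k _ => by rw [hEform k a, hEform k b]), h,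
      if_congr hcond rfl rfl]
  have hEadd : ∀ (θ : Fin n → ℝ) (a b : Fin n →₀ ℕ), E θ (a + b) = E θ a * E θ b := by
    intro θ a b
    simp only [hE, Finsupp.coe_add, Pi.add_apply, pow_add, Finset.prod_mul_distrib]
  have hbK : ∀ m ∈ T, ∀ α, m α < K := fun m hm α => by
    have := hbound m hm α
    omega
  have haddK : ∀ m ∈ T, ∀ m' ∈ T, ∀ α, (m + m' : Fin n →₀ ℕ) α < K := by
    intro m hm m' hm' α
    have h1 := hbound m hm α
    have h2 := hbound m' hm' α
    rw [Finsupp.add_apply]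
    omega
  have hW : ∑ k : Fin n → Fin K, (starRingEnd ℂ) (E (θg k) m₀) * E (θg k) m₀' = 0 := by
    have h := filter_appl m₀' m₀ (hbK _ hm₀'T) (hbK _ hm₀T)
    rw [if_neg (fun hc => hne hc.symm)] at h
    rw [← h]
    exact Finset.sum_congr rfl fun k _ => mul_comm _ _
  have havg : ∀ z : Fin n → ℂ,
      ∑ m ∈ T, ∑ m' ∈ T,
          (if (m + m₀' : Fin n →₀ ℕ) = m' + m₀ then ((K : ℂ)) ^ n else 0)
            * (B m m' * (Z z m * (starRingEnd ℂ) (Z z m'))) = 0 := by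
    intro z
    have h1 : ∑ k : Fin n → Fin K,
        ((starRingEnd ℂ) (E (θg k) m₀) * E (θg k) m₀')
          * (∑ m ∈ T, ∑ m' ∈ T,
              B m m' * ((E (θg k) m * Z z m) * (starRingEnd ℂ) (E (θg k) m' * Z z m')))
        = 0 := by
      rw [Finset.sum_congr rfl (fun k _ => by rw [hexp (θg k) z]), ← Finset.sum_mul, hW,
        zero_mul]
    have h2 : ∀ k : Fin n → Fin K,
        ((starRingEnd ℂ) (E (θg k) m₀) * E (θg k) m₀')
          * (∑ m ∈ T, ∑ m' ∈ T,
              B m m' * ((E (θg k) m * Z z m) * (starRingEnd ℂ) (E (θg k) m' * Z z m')))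
        = ∑ m ∈ T, ∑ m' ∈ T,
            (E (θg k) (m + m₀') * (starRingEnd ℂ) (E (θg k) (m' + m₀)))
              * (B m m' * (Z z m * (starRingEnd ℂ) (Z z m'))) := by
      intro k
      rw [Finset.mul_sum]
      refine Finset.sum_congr rfl fun m _ => ?_
      rw [Finset.mul_sum]
      refine Finset.sum_congr rfl fun m' _ => ?_
      simp only [hEadd, map_mul]
      ring
    have h3 : ∑ k : Fin n → Fin K,
        ((starRingEnd ℂ) (E (θg k) m₀) * E (θg k) m₀')
          * (∑ m ∈ T, ∑ m' ∈ T,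
              B m m' * ((E (θg k) m * Z z m) * (starRingEnd ℂ) (E (θg k) m' * Z z m')))
        = ∑ m ∈ T, ∑ m' ∈ T,
            (if (m + m₀' : Fin n →₀ ℕ) = m' + m₀ then ((K : ℂ)) ^ n else 0)
              * (B m m' * (Z z m * (starRingEnd ℂ) (Z z m'))) := by
      rw [Finset.sum_congr rfl (fun k _ => h2 k), Finset.sum_comm]
      refine Finset.sum_congr rfl fun m hm => ?_
      rw [Finset.sum_comm]
      refine Finset.sum_congr rfl fun m' hm' => ?_
      rw [← Finset.sum_mul, filter_appl _ _ (haddK _ hm _ hm₀'T) (haddK _ hm' _ hm₀T)]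
    exact Eq.trans h3.symm h1
  -- the polynomial whose coefficients are the filtered B's
  set P : MvPolynomial (Fin n) ℂ :=
    ∑ m ∈ T, ∑ m' ∈ T,
      if (m + m₀' : Fin n →₀ ℕ) = m' + m₀ then monomial (m + m') (B m m') else 0 with hP
  have hPzero : P = 0 := by
    apply zero_of_eval_real
    intro x
    have h1 := havg (fun α => (x α : ℂ))
    have hKn : ((K : ℂ)) ^ n ≠ 0 := pow_ne_zero _ (by exact_mod_cast hKpos.ne')
    have h2 : ((K : ℂ)) ^ n * eval (fun i => (x i : ℂ)) P
        = ∑ m ∈ T, ∑ m' ∈ T,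
            (if (m + m₀' : Fin n →₀ ℕ) = m' + m₀ then ((K : ℂ)) ^ n else 0)
              * (B m m' * (Z (fun α => (x α : ℂ)) m
                  * (starRingEnd ℂ) (Z (fun α => (x α : ℂ)) m'))) := by
      rw [hP, map_sum, Finset.mul_sum]
      refine Finset.sum_congr rfl fun m hm => ?_
      rw [map_sum, Finset.mul_sum]
      refine Finset.sum_congr rfl fun m' hm' => ?_
      by_cases hc : (m + m₀' : Fin n →₀ ℕ) = m' + m₀
      · rw [if_pos hc, if_pos hc, eval_monomial]
        have hZr : Z (fun α => (x α : ℂ)) m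
              * (starRingEnd ℂ) (Z (fun α => (x α : ℂ)) m')
            = ∏ α, ((x α : ℂ)) ^ ((m + m' : Fin n →₀ ℕ) α) := by
          simp only [hZ, map_prod, map_pow, Complex.conj_ofReal, Finsupp.add_apply]
          rw [← Finset.prod_mul_distrib]
          exact Finset.prod_congr rfl fun α _ => (pow_add _ _ _).symm
        rw [hZr, Finsupp.prod_pow]
      · rw [if_neg hc, if_neg hc, map_zero, mul_zero, zero_mul]
    rw [h1] at h2
    exact (mul_eq_zero.mp h2).resolve_left hKn
  have hc2 : coeff (m₀ + m₀') P = B m₀ m₀' := by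
    rw [hP, MvPolynomial.coeff_sum]
    rw [Finset.sum_eq_single_of_mem m₀ hm₀T ?side1]
    · rw [MvPolynomial.coeff_sum, Finset.sum_eq_single_of_mem m₀' hm₀'T ?side2]
      · rw [if_pos (add_comm m₀ m₀'), coeff_monomial, if_pos rfl]
      case side2 =>
        intro m' _ hne'
        by_cases hc : (m₀ + m₀' : Fin n →₀ ℕ) = m' + m₀
        · exfalso
          apply hne'
          ext α
          have := DFunLike.congr_fun hc α
          simp only [Finsupp.add_apply] at this
          omega
        · rw [if_neg hc, coeff_zero]
    case side1 =>
      intro m _ hne'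
      rw [MvPolynomial.coeff_sum]
      refine Finset.sum_eq_zero fun m' _ => ?_
      by_cases hc : (m + m₀' : Fin n →₀ ℕ) = m' + m₀
      · rw [if_pos hc, coeff_monomial, if_neg]
        intro heq
        apply hne'
        ext α
        have h1 := DFunLike.congr_fun hc α
        have h2 := DFunLike.congr_fun heq α
        simp only [Finsupp.add_apply] at h1 h2
        omega
      · rw [if_neg hc, coeff_zero]
  have hfin : B m₀ m₀' = 0 := by rw [← hc2, hPzero, coeff_zero]
  exact hfin

theorem monomial_components_up_to_unitary (n N : ℕ)
    (f : Fin N → MvPolynomial (Fin n) ℂ)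
    (hrot : ∀ (θ : Fin n → ℝ) (z : Fin n → ℂ),
      ∑ j : Fin N,
          Complex.normSq (eval (fun α => Complex.exp (Complex.I * (θ α)) * z α) (f j))
        = ∑ j : Fin N, Complex.normSq (eval z (f j))) :
    ∃ U ∈ Matrix.unitaryGroup (Fin N) ℂ,
      ∃ (c : Fin N → ℝ) (m : Fin N → (Fin n →₀ ℕ)),
        (∀ j : Fin N, 0 ≤ c j) ∧
        (∀ j : Fin N,
          ∑ k : Fin N, C (U j k) * f k = monomial (m j) ((c j : ℂ))) ∧
        (∀ j j' : Fin N, c j ≠ 0 → c j' ≠ 0 → m j = m j' → j = j') := by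
  classical
  set w : (Fin n →₀ ℕ) → EuclideanSpace ℂ (Fin N) := fun m => WithLp.toLp 2 (fun j => coeff m (f j)) with hw
  have horth : ∀ m m' : Fin n →₀ ℕ, m ≠ m' →
      (inner ℂ (w m) (w m') : ℂ) = 0 := by
    intro m m' hmm
    rw [PiLp.inner_apply]
    have := key_orth n N f hrot m' m (fun h => hmm h.symm)
    rw [← this]
    refine Finset.sum_congr rfl fun j _ => ?_
    rw [RCLike.inner_apply]
  set S : Finset (Fin n →₀ ℕ) := Finset.biUnion Finset.univ (fun j => (f j).support) with hS
  have hSz : ∀ m, m ∉ S → w m = 0 := by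
    intro m hm
    ext j
    have : m ∉ (f j).support := fun h => hm (Finset.mem_biUnion.2 ⟨j, Finset.mem_univ j, h⟩)
    simpa [hw] using MvPolynomial.notMem_support_iff.1 this
  set T' : Finset (Fin n →₀ ℕ) := S.filter (fun m => w m ≠ 0) with hT'
  have hT'z : ∀ m, m ∉ T' → w m = 0 := by
    intro m hm
    by_cases hmS : m ∈ S
    · by_contra h
      exact hm (Finset.mem_filter.2 ⟨hmS, h⟩)
    · exact hSz m hmS
  by_cases hempty : T' = ∅
  · -- all polynomials are zero
    have hf : ∀ k, f k = 0 := by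
      intro k
      ext m
      have h0 : w m = 0 := hT'z m (by rw [hempty]; exact Finset.notMem_empty m)
      have := congrArg (fun v => v k) h0
      simpa [hw] using this
    refine ⟨1, Matrix.mem_unitaryGroup_iff.2 (by simp), fun _ => 0, fun _ => 0, ?_, ?_, ?_⟩
    · exact fun j => le_refl 0
    · intro j
      simp [hf, MvPolynomial.monomial_zero]
    · intro j j' hj _ _
      exact absurd rfl hj
  · haveI hne : Nonempty {m // m ∈ T'} := by
      rcases Finset.nonempty_iff_ne_empty.2 hempty with ⟨m, hm⟩
      exact ⟨⟨m, hm⟩⟩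
    -- embedding of T' into Fin N
    have hcard : Fintype.card {m // m ∈ T'} ≤ Fintype.card (Fin N) := by
      rw [Fintype.card_coe, Fintype.card_fin]
      have hON : Orthonormal ℂ (fun mh : {m // m ∈ T'} => (‖w ↑mh‖ : ℂ)⁻¹ • w ↑mh) := by
        constructor
        · intro mh
          have hnz : w ↑mh ≠ 0 := (Finset.mem_filter.1 mh.2).2
          rw [norm_smul, norm_inv, Complex.norm_real, Real.norm_eq_abs,
            _root_.abs_of_nonneg (norm_nonneg _), inv_mul_cancel₀ (norm_ne_zero_iff.2 hnz)]
        · intro mh mh' hne'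
          rw [inner_smul_left, inner_smul_right,
            horth _ _ (fun h => hne' (Subtype.ext h)), mul_zero, mul_zero]
      have := hON.linearIndependent.fintype_card_le_finrank
      simpa using this
    obtain ⟨σ⟩ := Function.Embedding.nonempty_of_card_le hcard
    set ρ : Fin N → {m // m ∈ T'} := Function.invFun σ with hρ
    have hρσ : ∀ mh, ρ (σ mh) = mh := Function.leftInverse_invFun σ.injective
    have hσρ : ∀ j ∈ Set.range σ, σ (ρ j) = j := fun j hj => Function.invFun_eq hj
    set v : Fin N → EuclideanSpace ℂ (Fin N) :=
      fun j => (‖w ↑(ρ j)‖ : ℂ)⁻¹ • w ↑(ρ j) with hv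
    have hON : Orthonormal ℂ ((Set.range σ).restrict v) := by
      constructor
      · rintro ⟨j, hj⟩
        have hnz : w ↑(ρ j) ≠ 0 := (Finset.mem_filter.1 (ρ j).2).2
        show ‖v j‖ = 1
        rw [hv]
        rw [norm_smul, norm_inv, Complex.norm_real, Real.norm_eq_abs,
          _root_.abs_of_nonneg (norm_nonneg _), inv_mul_cancel₀ (norm_ne_zero_iff.2 hnz)]
      · rintro ⟨j, hj⟩ ⟨j', hj'⟩ hne'
        show (inner ℂ (v j) (v j') : ℂ) = 0
        have hρne : (↑(ρ j) : Fin n →₀ ℕ) ≠ ↑(ρ j') := by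
          intro h
          apply hne'
          have : ρ j = ρ j' := Subtype.ext h
          exact Subtype.ext ((hσρ j hj).symm.trans (by rw [this, hσρ j' hj']))
        rw [hv]
        rw [inner_smul_left, inner_smul_right, horth _ _ hρne, mul_zero, mul_zero]
    obtain ⟨b, hb⟩ := hON.exists_orthonormalBasis_extension_of_card_eq (by simp)
    set U : Matrix (Fin N) (Fin N) ℂ := Matrix.of fun j k => (starRingEnd ℂ) (b j k) with hU
    have hUmem : U ∈ Matrix.unitaryGroup (Fin N) ℂ := by
      rw [Matrix.mem_unitaryGroup_iff]
      ext j j'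
      rw [Matrix.mul_apply, Matrix.one_apply]
      have : ∀ k, U j k * (star U) k j' = (starRingEnd ℂ) (b j k) * b j' k := by
        intro k
        rw [Matrix.star_apply, hU]
        simp [mul_comm]
      rw [Finset.sum_congr rfl fun k _ => this k]
      have := b.orthonormal
      rw [orthonormal_iff_ite] at this
      have h2 := this j j'
      rw [PiLp.inner_apply] at h2
      simp only [RCLike.inner_apply] at h2
      rw [← h2]
      exact Finset.sum_congr rfl fun k _ => mul_comm _ _
    -- coefficient formula
    have hcoe : ∀ (j : Fin N) (m : Fin n →₀ ℕ),
        coeff m (∑ k : Fin N, C (U j k) * f k) = (inner ℂ (b j) (w m) : ℂ) := by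
      intro j m
      rw [MvPolynomial.coeff_sum, PiLp.inner_apply]
      refine Finset.sum_congr rfl fun k _ => ?_
      rw [coeff_C_mul, RCLike.inner_apply, hU]
      exact mul_comm _ _
    -- inner product of basis with w m
    have hinner : ∀ (j : Fin N) (m : Fin n →₀ ℕ) (hm : m ∈ T'),
        (inner ℂ (b j) (w m) : ℂ) = if j = σ ⟨m, hm⟩ then (‖w m‖ : ℂ) else 0 := by
      intro j m hm
      have hbσ : b (σ ⟨m, hm⟩) = (‖w m‖ : ℂ)⁻¹ • w m := by
        have := hb (σ ⟨m, hm⟩) (Set.mem_range_self _)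
        rw [this]
        simp only [hv, hρσ]
      have hnz : w m ≠ 0 := (Finset.mem_filter.1 hm).2
      have hwm : w m = (‖w m‖ : ℂ) • b (σ ⟨m, hm⟩) := by
        rw [hbσ, smul_smul, mul_inv_cancel₀, one_smul]
        exact_mod_cast norm_ne_zero_iff.2 hnz
      conv_lhs => rw [hwm, inner_smul_right]
      have := b.orthonormal
      rw [orthonormal_iff_ite] at this
      rw [this j (σ ⟨m, hm⟩)]
      by_cases h : j = σ ⟨m, hm⟩
      · rw [if_pos h, if_pos h, mul_one]
      · rw [if_neg h, if_neg h, mul_zero]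
    -- the data
    refine ⟨U, hUmem,
      fun j => if j ∈ Set.range σ then ‖w ↑(ρ j)‖ else 0,
      fun j => if j ∈ Set.range σ then ↑(ρ j) else 0, ?_, ?_, ?_⟩
    · intro j
      by_cases h : j ∈ Set.range σ <;> simp [h, norm_nonneg]
    · intro j
      ext m
      rw [hcoe j m, MvPolynomial.coeff_monomial]
      by_cases hj : j ∈ Set.range ⇑σ
      · simp only [hj, if_true]
        by_cases hm : m ∈ T'
        · rw [hinner j m hm]
          by_cases he : (↑(ρ j) : Fin n →₀ ℕ) = m
          · have hjσ : j = σ ⟨m, hm⟩ :=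
              (hσρ j hj).symm.trans (congrArg (⇑σ) (Subtype.ext he))
            rw [if_pos hjσ, if_pos he, he]
          · have hjne : j ≠ σ ⟨m, hm⟩ := by
              intro hjσ
              apply he
              have h1 : ρ j = ⟨m, hm⟩ := by rw [hjσ, hρσ]
              rw [h1]
            rw [if_neg hjne, if_neg he]
        · have hmne : (↑(ρ j) : Fin n →₀ ℕ) ≠ m := fun he => hm (he ▸ (ρ j).2)
          rw [hT'z m hm, inner_zero_right, if_neg hmne]
      · simp only [hj, if_false]
        have hz : (inner ℂ (b j) (w m) : ℂ) = 0 := by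
          by_cases hm : m ∈ T'
          · rw [hinner j m hm, if_neg]
            intro hjσ
            exact hj (hjσ ▸ Set.mem_range_self _)
          · rw [hT'z m hm, inner_zero_right]
        rw [hz]
        simp
    · intro j j' hj hj' hmm
      have hjr : j ∈ Set.range ⇑σ := by
        by_contra h
        exact hj (by simp [h])
      have hjr' : j' ∈ Set.range ⇑σ := by
        by_contra h
        exact hj' (by simp [h])
      simp only [hjr, hjr', if_true] at hmm
      have h1 : ρ j = ρ j' := Subtype.ext hmm
      exact (hσρ j hjr).symm.trans ((congrArg (⇑σ) h1).trans (hσρ j' hjr'))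
end

section
/- Let n ≥ 1, let a : Fin n → ℂ, and let b : Fin n → Fin n → ℂ be symmetric (b_{αβ} = b_{βα}) with zero diagonal. Let H be a polynomial over ℂ in the 2n variables X_1,…,X_n,Y_1,…,Y_n each of whose monomials has total degree at least 3 in the X variables and total degree at least 3 in the Y variables. Set P := 1 + Σ_{α} X_αY_α + Σ_{α} a_α X_α²Y_α² + Σ_{α<β} b_{αβ} X_αY_αX_βY_β + H. Then for every index h, the coefficient of the monomial X_hY_h in det M(P) equals 4a_h + Σ_{k≠h} b_{hk} + (n − 1). -/
open MvPolynomial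

namespace CoeffAux

variable {n : ℕ}

abbrev PC (n : ℕ) := MvPolynomial (Fin n ⊕ Fin n) ℂ

/-- Total degree of an exponent vector. -/
def dg {n : ℕ} (m : Fin n ⊕ Fin n →₀ ℕ) : ℕ := ∑ i : Fin n ⊕ Fin n, m i

lemma dg_add (m₁ m₂ : Fin n ⊕ Fin n →₀ ℕ) : dg (m₁ + m₂) = dg m₁ + dg m₂ := by
  simp [dg, Finset.sum_add_distrib]

lemma dg_single (i : Fin n ⊕ Fin n) (k : ℕ) : dg (Finsupp.single i k) = k := by
  simp [dg, Finsupp.single_apply]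

lemma dg_zero : dg (0 : Fin n ⊕ Fin n →₀ ℕ) = 0 := by simp [dg]

/-- Every monomial of `f` has total degree at least `k`. -/
def MD (k : ℕ) (f : PC n) : Prop := ∀ m, dg m < k → coeff m f = 0

lemma MD_any (f : PC n) : MD 0 f := fun m hm => absurd hm (Nat.not_lt_zero _)

lemma MD.mono {k j : ℕ} {f : PC n} (h : MD k f) (hj : j ≤ k) : MD j f :=
  fun m hm => h m (lt_of_lt_of_le hm hj)

lemma MD_zero (k : ℕ) : MD k (0 : PC n) := fun m _ => coeff_zero m

lemma MD_add {k : ℕ} {f g : PC n} (hf : MD k f) (hg : MD k g) : MD k (f + g) := fun m hm => by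
  rw [coeff_add, hf m hm, hg m hm, add_zero]

lemma MD_neg {k : ℕ} {f : PC n} (hf : MD k f) : MD k (-f) := fun m hm => by
  rw [coeff_neg, hf m hm, neg_zero]

lemma MD_sub {k : ℕ} {f g : PC n} (hf : MD k f) (hg : MD k g) : MD k (f - g) := by
  rw [sub_eq_add_neg]; exact MD_add hf (MD_neg hg)

lemma MD_sum {k : ℕ} {ι : Type*} {s : Finset ι} {f : ι → PC n} (h : ∀ i ∈ s, MD k (f i)) :
    MD k (∑ i ∈ s, f i) := fun m hm => by
  rw [coeff_sum]; exact Finset.sum_eq_zero fun i hi => h i hi m hm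

lemma MD_mul {j k : ℕ} {f g : PC n} (hf : MD j f) (hg : MD k g) : MD (j + k) (f * g) := by
  intro m hm
  rw [coeff_mul]
  apply Finset.sum_eq_zero
  rintro ⟨u, v⟩ huv
  rw [Finset.HasAntidiagonal.mem_antidiagonal] at huv
  have hd : dg u + dg v < j + k := by rw [← dg_add, huv]; exact hm
  rcases lt_or_ge (dg u) j with h1 | h1
  · rw [hf u h1, zero_mul]
  · have h2 : dg v < k := by omega
    rw [hg v h2, mul_zero]

lemma MD_mul' {j k l : ℕ} {f g : PC n} (hf : MD j f) (hg : MD k g) (h : l ≤ j + k) :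
    MD l (f * g) := (MD_mul hf hg).mono h

lemma MD_C_mul {k : ℕ} {c : ℂ} {f : PC n} (hf : MD k f) : MD k (C c * f) := fun m hm => by
  rw [coeff_C_mul, hf m hm, mul_zero]

lemma MD_X (i : Fin n ⊕ Fin n) : MD 1 (X i : PC n) := by
  intro m hm
  rw [coeff_X']
  split_ifs with he
  · exfalso; rw [← he, dg_single] at hm; omega
  · rfl

lemma MD_pderiv {k : ℕ} {f : PC n} (i : Fin n ⊕ Fin n) (hf : MD (k + 1) f) :
    MD k (pderiv i f) := by
  intro m hm
  conv_lhs => rw [f.as_sum]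
  rw [map_sum, coeff_sum]
  apply Finset.sum_eq_zero
  intro u hu
  rw [pderiv_monomial, coeff_monomial]
  split_ifs with he
  · by_cases hui : u i = 0
    · simp [hui]
    · exfalso
      have h1 : Finsupp.single i 1 ≤ u := Finsupp.single_le_iff.mpr (Nat.one_le_iff_ne_zero.mpr hui)
      have h2 : (u - Finsupp.single i 1) + Finsupp.single i 1 = u := tsub_add_cancel_of_le h1
      have h3 : k + 1 ≤ dg u := by
        by_contra hc
        rw [mem_support_iff] at hu
        exact hu (hf u (by omega))
      have h4 : dg u = dg m + 1 := by rw [← h2, dg_add, dg_single, he]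
      omega
  · rfl

lemma XX_eq (i j : Fin n ⊕ Fin n) :
    (X i * X j : PC n) = monomial (Finsupp.single i 1 + Finsupp.single j 1) 1 := by
  rw [← one_mul (X i : PC n), ← C_1, C_mul_X_eq_monomial, ← one_mul (X j : PC n), ← C_1,
    C_mul_X_eq_monomial, monomial_mul, one_mul]

lemma coeff_XX (i j : Fin n ⊕ Fin n) (m : Fin n ⊕ Fin n →₀ ℕ) :
    coeff m (X i * X j : PC n)
      = if Finsupp.single i 1 + Finsupp.single j 1 = m then 1 else 0 := by
  rw [XX_eq, coeff_monomial]

lemma MD_XX (i j : Fin n ⊕ Fin n) : MD 2 (X i * X j : PC n) :=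
  MD_mul' (MD_X i) (MD_X j) le_rfl

lemma pair_eq {p q r s : Fin n} :
    (Finsupp.single (Sum.inl p) 1 + Finsupp.single (Sum.inr q) 1 : Fin n ⊕ Fin n →₀ ℕ)
      = Finsupp.single (Sum.inl r) 1 + Finsupp.single (Sum.inr s) 1 ↔ p = r ∧ q = s := by
  constructor
  · intro he
    have h1 := DFunLike.congr_fun he (Sum.inl p)
    have h2 := DFunLike.congr_fun he (Sum.inr q)
    simp [Finsupp.single_apply] at h1 h2
    have e1 : p = r := by
      exact h1.symm
    have e2 : q = s := by
      exact h2.symm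
    exact ⟨e1, e2⟩
  · rintro ⟨rfl, rfl⟩; rfl

lemma coeff_CC {m : Fin n ⊕ Fin n →₀ ℕ} (hm : dg m = 2) (c₁ c₂ : ℂ) {f g : PC n}
    (hf : MD 2 f) (hg : MD 2 g) :
    coeff m ((C c₁ + f) * (C c₂ + g)) = c₁ * coeff m g + c₂ * coeff m f := by
  have hm0 : ¬((0 : Fin n ⊕ Fin n →₀ ℕ) = m) := by
    intro e; rw [← e, dg_zero] at hm; omega
  have e : (C c₁ + f) * (C c₂ + g) = C c₁ * C c₂ + (C c₁ * g + C c₂ * f + f * g) := by ring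
  rw [e, coeff_add, coeff_add, coeff_add, ← C_mul, coeff_C, if_neg hm0, coeff_C_mul, coeff_C_mul,
    MD_mul' hf hg (by omega : 4 ≤ 2 + 2) m (by omega), add_zero, zero_add]

lemma coeff_mul_XX {m : Fin n ⊕ Fin n →₀ ℕ} (hm : dg m = 2) (i j : Fin n ⊕ Fin n) {f g : PC n}
    (hf : MD 2 f) (hg : MD 2 g) :
    coeff m ((X i + f) * (X j + g)) = coeff m (X i * X j) := by
  have h1 : coeff m (X i * g) = 0 := MD_mul' (MD_X i) hg (by omega : 3 ≤ 1 + 2) m (by omega)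
  have h2 : coeff m (f * X j) = 0 := MD_mul' hf (MD_X j) (by omega : 3 ≤ 2 + 1) m (by omega)
  have h3 : coeff m (f * g) = 0 := MD_mul' hf hg (by omega : 3 ≤ 2 + 2) m (by omega)
  have e : (X i + f) * (X j + g) = X i * X j + (X i * g + f * X j + f * g) := by ring
  rw [e, coeff_add, coeff_add, coeff_add, h1, h2, h3, add_zero, add_zero, add_zero]

lemma MD_prod_one_add {ι : Type*} [DecidableEq ι] (s : Finset ι) (Q : ι → PC n)
    (hQ : ∀ i ∈ s, MD 2 (Q i)) :
    MD 2 ((∏ i ∈ s, (1 + Q i)) - 1) := by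
  induction s using Finset.induction with
  | empty => simpa using MD_zero 2
  | insert c s' hx ih =>
    rw [Finset.prod_insert hx]
    have hR := ih (fun i hi => hQ i (Finset.mem_insert_of_mem hi))
    have hQa := hQ c (Finset.mem_insert_self c s')
    have e : (1 + Q c) * ∏ i ∈ s', (1 + Q i) - 1
        = ((∏ i ∈ s', (1 + Q i)) - 1) + Q c * ((∏ i ∈ s', (1 + Q i)) - 1) + Q c := by ring
    rw [e]
    exact MD_add (MD_add hR (MD_mul' hQa hR (by omega : 2 ≤ 2 + 2))) hQa

lemma coeff_prod_one_add {ι : Type*} [DecidableEq ι] {m : Fin n ⊕ Fin n →₀ ℕ} (hm : dg m = 2)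
    (s : Finset ι) (Q : ι → PC n) (hQ : ∀ i ∈ s, MD 2 (Q i)) :
    coeff m (∏ i ∈ s, (1 + Q i)) = ∑ i ∈ s, coeff m (Q i) := by
  have hm0 : ¬((0 : Fin n ⊕ Fin n →₀ ℕ) = m) := by
    intro e; rw [← e, dg_zero] at hm; omega
  induction s using Finset.induction with
  | empty => simp [coeff_one, if_neg hm0]
  | insert c s' hx ih =>
    rw [Finset.prod_insert hx, Finset.sum_insert hx]
    have hR := MD_prod_one_add s' Q (fun i hi => hQ i (Finset.mem_insert_of_mem hi))
    have hQa := hQ c (Finset.mem_insert_self c s')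
    have e : (1 + Q c) * ∏ i ∈ s', (1 + Q i)
        = (∏ i ∈ s', (1 + Q i)) + Q c + Q c * ((∏ i ∈ s', (1 + Q i)) - 1) := by ring
    rw [e, coeff_add, coeff_add, MD_mul' hQa hR (by omega : 3 ≤ 2 + 2) m (by omega), add_zero,
      ih (fun i hi => hQ i (Finset.mem_insert_of_mem hi))]
    ring

end CoeffAux

open CoeffAux in
theorem coeff_XhYh_det_metricMatrix (n : ℕ) (hn : 1 ≤ n)
    (a : Fin n → ℂ) (b : Fin n → Fin n → ℂ)
    (hbsymm : ∀ α β : Fin n, b α β = b β α)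
    (hbdiag : ∀ α : Fin n, b α α = 0)
    (H : MvPolynomial (Fin n ⊕ Fin n) ℂ)
    (hH : ∀ m ∈ H.support,
      3 ≤ ∑ α : Fin n, m (Sum.inl α) ∧ 3 ≤ ∑ α : Fin n, m (Sum.inr α))
    (P : MvPolynomial (Fin n ⊕ Fin n) ℂ)
    (hP : P = 1 + (∑ α : Fin n, X (Sum.inl α) * X (Sum.inr α))
        + (∑ α : Fin n, C (a α) * (X (Sum.inl α)) ^ 2 * (X (Sum.inr α)) ^ 2)
        + (∑ p ∈ Finset.univ.filter (fun p : Fin n × Fin n => p.1 < p.2),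
            C (b p.1 p.2) *
              (X (Sum.inl p.1) * X (Sum.inr p.1) * X (Sum.inl p.2) * X (Sum.inr p.2)))
        + H) :
    ∀ h : Fin n,
      coeff (Finsupp.single (Sum.inl h) 1 + Finsupp.single (Sum.inr h) 1)
          (Matrix.det (metricMatrix n P))
        = 4 * a h + (∑ k ∈ Finset.univ.erase h, b h k) + ((n : ℂ) - 1) := by
  classical
  intro h
  set d : Fin n ⊕ Fin n →₀ ℕ :=
    Finsupp.single (Sum.inl h) 1 + Finsupp.single (Sum.inr h) 1 with hdd
  have hd2 : dg d = 2 := by rw [hdd, dg_add, dg_single, dg_single]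
  have hd0 : ¬((0 : Fin n ⊕ Fin n →₀ ℕ) = d) := by
    intro e; rw [← e, dg_zero] at hd2; omega
  set S : PC n := ∑ γ : Fin n, X (Sum.inl γ) * X (Sum.inr γ) with hS
  set A : PC n := ∑ γ : Fin n, C (a γ) * (X (Sum.inl γ)) ^ 2 * (X (Sum.inr γ)) ^ 2 with hA
  set B : PC n := ∑ p ∈ Finset.univ.filter (fun p : Fin n × Fin n => p.1 < p.2),
      C (b p.1 p.2) *
        (X (Sum.inl p.1) * X (Sum.inr p.1) * X (Sum.inl p.2) * X (Sum.inr p.2)) with hB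
  have hP' : P = 1 + S + A + B + H := hP
  -- MD facts
  have mdS : MD 2 S := MD_sum (fun γ _ => MD_XX _ _)
  have mdA : MD 4 A := MD_sum (fun γ _ => by
    rw [pow_two, pow_two]
    exact MD_mul' (MD_C_mul (MD_XX _ _)) (MD_XX _ _) (by omega))
  have mdB : MD 4 B := MD_sum (fun p _ =>
    MD_C_mul (MD_mul' (MD_mul' (MD_XX _ _) (MD_X _) (by norm_num : (3:ℕ) ≤ 2 + 1)) (MD_X _)
      (by norm_num : (4:ℕ) ≤ 3 + 1)))
  have mdH : MD 6 H := by
    intro m hm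
    by_contra hc
    have hd' := hH m (mem_support_iff.mpr hc)
    have he : dg m = (∑ α : Fin n, m (Sum.inl α)) + (∑ α : Fin n, m (Sum.inr α)) :=
      Fintype.sum_sum_type _
    omega
  have mdPr' : MD 2 (S + A + B + H) :=
    MD_add (MD_add (MD_add mdS (mdA.mono (by omega))) (mdB.mono (by omega))) (mdH.mono (by omega))
  have mdPr : MD 2 (P - 1) := by
    have : P - 1 = S + A + B + H := by rw [hP']; ring
    rw [this]; exact mdPr'
  -- first derivatives
  have dSY : ∀ β, pderiv (Sum.inr β) S = X (Sum.inl β) := by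
    intro β
    rw [hS, map_sum, Finset.sum_eq_single β]
    · simp [pderiv_mul, pderiv_X]
    · intro c _ hc
      simp [pderiv_mul, pderiv_X, Pi.single_apply, hc.symm]
    · simp
  have dSX : ∀ α, pderiv (Sum.inl α) S = X (Sum.inr α) := by
    intro α
    rw [hS, map_sum, Finset.sum_eq_single α]
    · simp [pderiv_mul, pderiv_X]
    · intro c _ hc
      simp [pderiv_mul, pderiv_X, Pi.single_apply, hc.symm]
    · simp
  have pdPX : ∀ α, pderiv (Sum.inl α) P
      = X (Sum.inr α)
        + (pderiv (Sum.inl α) A + pderiv (Sum.inl α) B + pderiv (Sum.inl α) H) := by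
    intro α
    rw [hP']
    simp only [map_add, pderiv_one]
    rw [dSX α]
    ring
  have pdPY : ∀ β, pderiv (Sum.inr β) P
      = X (Sum.inl β)
        + (pderiv (Sum.inr β) A + pderiv (Sum.inr β) B + pderiv (Sum.inr β) H) := by
    intro β
    rw [hP']
    simp only [map_add, pderiv_one]
    rw [dSY β]
    ring
  have mdRX : ∀ α, MD 2 (pderiv (Sum.inl α) A + pderiv (Sum.inl α) B + pderiv (Sum.inl α) H) :=
    fun α => MD_add (MD_add (MD_pderiv _ (mdA.mono (by omega))) (MD_pderiv _ (mdB.mono (by omega))))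
      (MD_pderiv _ (mdH.mono (by omega)))
  have mdRY : ∀ β, MD 2 (pderiv (Sum.inr β) A + pderiv (Sum.inr β) B + pderiv (Sum.inr β) H) :=
    fun β => MD_add (MD_add (MD_pderiv _ (mdA.mono (by omega))) (MD_pderiv _ (mdB.mono (by omega))))
      (MD_pderiv _ (mdH.mono (by omega)))
  -- second derivatives
  have ddS : ∀ α β, pderiv (Sum.inl α) (pderiv (Sum.inr β) S) = if α = β then 1 else 0 := by
    intro α β
    rw [dSY β]
    by_cases hab : α = β
    · subst hab; rw [if_pos rfl, pderiv_X_self]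
    · rw [if_neg hab, pderiv_X_of_ne (fun e => hab (Sum.inl.inj e).symm)]
  have ddA : ∀ α β, pderiv (Sum.inl α) (pderiv (Sum.inr β) A)
      = if α = β then C (4 * a α) * (X (Sum.inl α) * X (Sum.inr α)) else 0 := by
    intro α β
    rw [hA, map_sum, map_sum]
    by_cases hab : α = β
    · subst hab
      rw [Finset.sum_eq_single α]
      · simp [pow_two, pderiv_mul, pderiv_X, pderiv_C, Pi.single_apply, map_ofNat]
        ring
      · intro c _ hc
        simp [pow_two, pderiv_mul, pderiv_X, pderiv_C, Pi.single_apply, hc.symm]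
      · simp
    · rw [if_neg hab]
      apply Finset.sum_eq_zero
      intro c _
      by_cases hcb : c = β
      · subst hcb
        simp [pow_two, pderiv_mul, pderiv_X, pderiv_C, Pi.single_apply, hab]
      · simp [pow_two, pderiv_mul, pderiv_X, pderiv_C, Pi.single_apply, hcb]
  have ddP : ∀ α β, pderiv (Sum.inl α) (pderiv (Sum.inr β) P)
      = (if α = β then 1 else 0)
        + ((if α = β then C (4 * a α) * (X (Sum.inl α) * X (Sum.inr α)) else 0)
          + pderiv (Sum.inl α) (pderiv (Sum.inr β) B)
          + pderiv (Sum.inl α) (pderiv (Sum.inr β) H)) := by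
    intro α β
    rw [hP']
    simp only [map_add, pderiv_one, map_zero]
    rw [ddS α β, ddA α β]
    ring
  have mdDD' : ∀ α β, MD 2 ((if α = β then C (4 * a α) * (X (Sum.inl α) * X (Sum.inr α)) else 0)
      + pderiv (Sum.inl α) (pderiv (Sum.inr β) B)
      + pderiv (Sum.inl α) (pderiv (Sum.inr β) H)) := by
    intro α β
    refine MD_add (MD_add ?_ (MD_pderiv _ (MD_pderiv _ (mdB.mono (by omega)))))
      (MD_pderiv _ (MD_pderiv _ (mdH.mono (by omega))))
    split_ifs
    · exact MD_C_mul (MD_XX _ _)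
    · exact MD_zero 2
  -- off-diagonal entries
  have mdOff : ∀ α β, α ≠ β → MD 2 (metricMatrix n P α β) := by
    intro α β hne
    show MD 2 (P * pderiv (Sum.inl α) (pderiv (Sum.inr β) P)
      - pderiv (Sum.inl α) P * pderiv (Sum.inr β) P)
    apply MD_sub
    · have h2 : MD 2 (pderiv (Sum.inl α) (pderiv (Sum.inr β) P)) := by
        rw [ddP α β, if_neg hne]
        exact MD_add (MD_zero 2) (mdDD' α β)
      exact MD_mul' (MD_any P) h2 (by omega)
    · rw [pdPX α, pdPY β]
      exact MD_mul' (MD_add (MD_X _) ((mdRX α).mono (by omega)))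
        (MD_add (MD_X _) ((mdRY β).mono (by omega))) (by omega)
  -- coefficient of X_h Y_h in X_p Y_q
  have cXX : ∀ p q : Fin n, coeff d (X (Sum.inl p) * X (Sum.inr q) : PC n)
      = if p = h ∧ q = h then 1 else 0 := by
    intro p q
    rw [coeff_XX, hdd]
    by_cases e : p = h ∧ q = h
    · obtain ⟨rfl, rfl⟩ := e; rw [if_pos rfl, if_pos ⟨rfl, rfl⟩]
    · rw [if_neg (fun he => e (pair_eq.mp he)), if_neg e]
  -- coefficient of the second derivative of B on the diagonal
  have key : ∀ α p q : Fin n, p ≠ q →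
      coeff d (pderiv (Sum.inl α) (pderiv (Sum.inr α)
        (C (b p q) * (X (Sum.inl p) * X (Sum.inr p) * X (Sum.inl q) * X (Sum.inr q)) : PC n)))
      = b p q * ((if α = p ∧ q = h then 1 else 0) + (if α = q ∧ p = h then 1 else 0)) := by
    intro α p q hpq
    rw [pderiv_C_mul, pderiv_C_mul, coeff_C_mul]
    congr 1
    by_cases hp : α = p
    · subst hp
      have e1 : pderiv (Sum.inl α) (pderiv (Sum.inr α)
          (X (Sum.inl α) * X (Sum.inr α) * X (Sum.inl q) * X (Sum.inr q) : PC n))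
          = X (Sum.inl q) * X (Sum.inr q) := by
        simp [pderiv_mul, pderiv_X, Pi.single_apply, hpq, Ne.symm hpq]
        try ring
      rw [e1, cXX]
      simp [hpq]
    · by_cases hq : α = q
      · subst hq
        have e1 : pderiv (Sum.inl α) (pderiv (Sum.inr α)
            (X (Sum.inl p) * X (Sum.inr p) * X (Sum.inl α) * X (Sum.inr α) : PC n))
            = X (Sum.inl p) * X (Sum.inr p) := by
          simp [pderiv_mul, pderiv_X, Pi.single_apply, hp, Ne.symm hp]
          try ring
        rw [e1, cXX]
        simp [hp]
      · have e1 : pderiv (Sum.inl α) (pderiv (Sum.inr α)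
            (X (Sum.inl p) * X (Sum.inr p) * X (Sum.inl q) * X (Sum.inr q) : PC n)) = 0 := by
          simp [pderiv_mul, pderiv_X, Pi.single_apply, hp, hq, Ne.symm hp, Ne.symm hq]
        rw [e1]
        simp [hp, hq]
  have cddB : ∀ α, coeff d (pderiv (Sum.inl α) (pderiv (Sum.inr α) B)) = b α h := by
    intro α
    rw [hB, map_sum, map_sum, coeff_sum]
    have hterm : ∀ p : Fin n × Fin n,
        p ∈ Finset.univ.filter (fun p : Fin n × Fin n => p.1 < p.2) →
        coeff d (pderiv (Sum.inl α) (pderiv (Sum.inr α) (C (b p.1 p.2) *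
          (X (Sum.inl p.1) * X (Sum.inr p.1) * X (Sum.inl p.2) * X (Sum.inr p.2)))))
        = b p.1 p.2 * ((if α = p.1 ∧ p.2 = h then 1 else 0)
            + (if α = p.2 ∧ p.1 = h then 1 else 0)) := by
      intro p hp
      exact key α p.1 p.2 (ne_of_lt (Finset.mem_filter.mp hp).2)
    rw [Finset.sum_congr rfl hterm]
    rcases lt_trichotomy α h with hlt | heq | hgt
    · rw [Finset.sum_eq_single_of_mem (α, h)
        (Finset.mem_filter.mpr ⟨Finset.mem_univ _, hlt⟩)]
      · simp [ne_of_lt hlt]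
      · rintro ⟨p1, p2⟩ hp hne
        have hp12 : p1 < p2 := (Finset.mem_filter.mp hp).2
        have n1 : ¬(α = p1 ∧ p2 = h) := by rintro ⟨rfl, rfl⟩; exact hne rfl
        have n2 : ¬(α = p2 ∧ p1 = h) := by rintro ⟨rfl, rfl⟩; exact absurd hp12 (lt_asymm hlt)
        simp [n1, n2]
    · subst heq
      rw [hbdiag]
      apply Finset.sum_eq_zero
      rintro ⟨p1, p2⟩ hp
      have hp12 : p1 < p2 := (Finset.mem_filter.mp hp).2
      have n1 : ¬(α = p1 ∧ p2 = α) := by rintro ⟨rfl, rfl⟩; exact absurd hp12 (lt_irrefl _)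
      have n2 : ¬(α = p2 ∧ p1 = α) := by rintro ⟨rfl, rfl⟩; exact absurd hp12 (lt_irrefl _)
      simp [n1, n2]
    · rw [Finset.sum_eq_single_of_mem (h, α)
        (Finset.mem_filter.mpr ⟨Finset.mem_univ _, hgt⟩)]
      · have hne : α ≠ h := ne_of_gt hgt
        simp [hne]
        exact (hbsymm α h).symm
      · rintro ⟨p1, p2⟩ hp hne
        have hp12 : p1 < p2 := (Finset.mem_filter.mp hp).2
        have n1 : ¬(α = p1 ∧ p2 = h) := by rintro ⟨rfl, rfl⟩; exact absurd hp12 (lt_asymm hgt)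
        have n2 : ¬(α = p2 ∧ p1 = h) := by rintro ⟨rfl, rfl⟩; exact hne rfl
        simp [n1, n2]
  -- coefficient of S
  have cS : coeff d S = 1 := by
    rw [hS, coeff_sum]
    have e : ∀ γ : Fin n, γ ∈ (Finset.univ : Finset (Fin n)) →
        coeff d (X (Sum.inl γ) * X (Sum.inr γ) : PC n) = if γ = h then 1 else 0 := by
      intro γ _; rw [cXX]; simp
    rw [Finset.sum_congr rfl e, Finset.sum_ite_eq' Finset.univ h (fun _ => (1 : ℂ))]
    simp
  -- diagonal entry coefficient
  have cDiag : ∀ α, coeff d (metricMatrix n P α α)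
      = 1 + ((4 * a α) * (if α = h then 1 else 0) + b α h) - (if α = h then 1 else 0) := by
    intro α
    show coeff d (P * pderiv (Sum.inl α) (pderiv (Sum.inr α) P)
      - pderiv (Sum.inl α) P * pderiv (Sum.inr α) P) = _
    rw [coeff_sub]
    have e1 : P * pderiv (Sum.inl α) (pderiv (Sum.inr α) P)
        = (C 1 + (S + A + B + H)) * (C 1
          + ((if α = α then C (4 * a α) * (X (Sum.inl α) * X (Sum.inr α)) else 0)
            + pderiv (Sum.inl α) (pderiv (Sum.inr α) B)
            + pderiv (Sum.inl α) (pderiv (Sum.inr α) H))) := by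
      rw [ddP α α, if_pos rfl, if_pos rfl, hP', C_1]
      ring
    have cE : coeff d ((if α = α then C (4 * a α) * (X (Sum.inl α) * X (Sum.inr α)) else 0)
        + pderiv (Sum.inl α) (pderiv (Sum.inr α) B)
        + pderiv (Sum.inl α) (pderiv (Sum.inr α) H))
        = (4 * a α) * (if α = h then 1 else 0) + b α h := by
      rw [coeff_add, coeff_add, cddB α,
        MD_pderiv (k := 3) _ (MD_pderiv (k := 4) _ (mdH.mono (by norm_num : (5:ℕ) ≤ 6))) d
          (by omega), add_zero, if_pos rfl,
        coeff_C_mul, cXX]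
      simp
    have cPr : coeff d (S + A + B + H) = 1 := by
      rw [coeff_add, coeff_add, coeff_add, cS, mdA d (by omega), mdB d (by omega),
        mdH d (by omega), add_zero, add_zero, add_zero]
    have cYX : coeff d (X (Sum.inr α) * X (Sum.inl α) : PC n) = if α = h then 1 else 0 := by
      rw [mul_comm, cXX]; simp
    rw [e1, coeff_CC hd2 1 1 mdPr' (mdDD' α α),
      cE, cPr, pdPX α, pdPY α,
      coeff_mul_XX hd2 _ _ (mdRX α) (mdRY α), cYX]
    ring
  -- the determinant
  have mdQ : ∀ α : Fin n, MD 2 (metricMatrix n P α α - 1) := by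
    intro α
    have e : metricMatrix n P α α - 1
        = ((P - 1) + P * ((if α = α then C (4 * a α) * (X (Sum.inl α) * X (Sum.inr α)) else 0)
            + pderiv (Sum.inl α) (pderiv (Sum.inr α) B)
            + pderiv (Sum.inl α) (pderiv (Sum.inr α) H)))
          - pderiv (Sum.inl α) P * pderiv (Sum.inr α) P := by
      show P * pderiv (Sum.inl α) (pderiv (Sum.inr α) P)
        - pderiv (Sum.inl α) P * pderiv (Sum.inr α) P - 1 = _
      rw [ddP α α, if_pos rfl, if_pos rfl]
      ring
    rw [e]
    refine MD_sub (MD_add mdPr (MD_mul' (MD_any P) (mdDD' α α) (by omega))) ?_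
    rw [pdPX α, pdPY α]
    exact MD_mul' (MD_add (MD_X _) ((mdRX α).mono (by omega)))
      (MD_add (MD_X _) ((mdRY α).mono (by omega))) (by omega)
  rw [Matrix.det_apply, coeff_sum, Finset.sum_eq_single (1 : Equiv.Perm (Fin n))]
  · rw [Equiv.Perm.sign_one, one_smul]
    simp only [Equiv.Perm.one_apply]
    have e : ∀ i : Fin n, i ∈ (Finset.univ : Finset (Fin n)) →
        metricMatrix n P i i = 1 + (metricMatrix n P i i - 1) := fun i _ => by ring
    rw [Finset.prod_congr rfl e,
      coeff_prod_one_add hd2 Finset.univ _ (fun i _ => mdQ i)]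
    have e2 : ∀ α : Fin n, α ∈ (Finset.univ : Finset (Fin n)) →
        coeff d (metricMatrix n P α α - 1)
        = 1 + ((4 * a α) * (if α = h then 1 else 0) + b α h) - (if α = h then 1 else 0) := by
      intro α _
      rw [coeff_sub, coeff_one, if_neg hd0, sub_zero, cDiag α]
    rw [Finset.sum_congr rfl e2, Finset.sum_sub_distrib, Finset.sum_add_distrib,
      Finset.sum_add_distrib]
    have p1 : ∑ _α : Fin n, (1 : ℂ) = n := by simp
    have p2 : ∑ α : Fin n, (4 * a α) * (if α = h then 1 else 0) = 4 * a h := by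
      have e3 : ∀ α : Fin n, α ∈ (Finset.univ : Finset (Fin n)) →
          (4 * a α) * (if α = h then (1 : ℂ) else 0) = if α = h then 4 * a α else 0 := by
        intro α _; rw [mul_ite, mul_one, mul_zero]
      rw [Finset.sum_congr rfl e3, Finset.sum_ite_eq' Finset.univ h (fun α => 4 * a α)]
      simp
    have p3 : ∑ α : Fin n, b α h = ∑ k ∈ Finset.univ.erase h, b h k := by
      rw [← Finset.add_sum_erase _ _ (Finset.mem_univ h), hbdiag, zero_add]
      exact Finset.sum_congr rfl (fun k _ => hbsymm k h)
    have p4 : ∑ α : Fin n, (if α = h then (1 : ℂ) else 0) = 1 := by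
      rw [Finset.sum_ite_eq' Finset.univ h (fun _ => (1 : ℂ))]
      simp
    rw [p1, p2, p3, p4]
    ring
  · intro σ _ hσ
    obtain ⟨i, hi⟩ : ∃ i, σ i ≠ i := by
      by_contra hc; push_neg at hc; exact hσ (Equiv.ext hc)
    have hji : σ⁻¹ i ≠ i := by
      intro e; apply hi
      calc σ i = σ (σ⁻¹ i) := by rw [e]
        _ = i := Equiv.apply_symm_apply σ i
    have hprod : coeff d (∏ k, metricMatrix n P (σ k) k) = 0 := by
      rw [← Finset.mul_prod_erase Finset.univ _ (Finset.mem_univ i),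
        ← Finset.mul_prod_erase (Finset.univ.erase i) _
          (Finset.mem_erase.mpr ⟨hji, Finset.mem_univ _⟩)]
      have h2 : σ (σ⁻¹ i) ≠ σ⁻¹ i := by
        rw [show σ (σ⁻¹ i) = i from Equiv.apply_symm_apply σ i]; exact Ne.symm hji
      have m3 : MD 2 (metricMatrix n P (σ (σ⁻¹ i)) (σ⁻¹ i)
          * ∏ k ∈ (Finset.univ.erase i).erase (σ⁻¹ i), metricMatrix n P (σ k) k) :=
        MD_mul' (mdOff _ _ h2) (MD_any _) (by norm_num : (2:ℕ) ≤ 2 + 0)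
      exact MD_mul' (mdOff _ _ hi) m3 (by norm_num : (4:ℕ) ≤ 2 + 2) d (by omega)
    rw [coeff_smul, hprod, smul_zero]
  · intro hnm; exact absurd (Finset.mem_univ _) hnm
end

section
/- Let n and k be positive integers with 2k < n, let a : Fin n → ℝ, let b : Fin n → Fin n → ℝ be symmetric with zero diagonal, and let λ ∈ ℝ. Suppose that for every h, 4a_h + Σ_{j} b_{hj} = (n + 1) − λ/2, and that the number of indices h with a_h ≠ 0 plus the number of pairs (i,j) with i < j and b_{ij} ≠ 0 is at most k. Then λ = 2(n + 1). -/
theorem counting_argument_low_codimension (n k : ℕ) (hn : 0 < n) (hk : 0 < k)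
    (hnk : 2 * k < n)
    (a : Fin n → ℝ) (b : Fin n → Fin n → ℝ)
    (hbsymm : ∀ i j : Fin n, b i j = b j i)
    (hbdiag : ∀ i : Fin n, b i i = 0)
    (lam : ℝ)
    (heq : ∀ h : Fin n, 4 * a h + ∑ j : Fin n, b h j = (n + 1 : ℝ) - lam / 2)
    (hcard :
      (Finset.univ.filter (fun h : Fin n => a h ≠ 0)).card +
        (Finset.univ.filter
          (fun p : Fin n × Fin n => p.1 < p.2 ∧ b p.1 p.2 ≠ 0)).card ≤ k) :
    lam = 2 * (n + 1 : ℝ) := by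
  classical
  set A := Finset.univ.filter (fun h : Fin n => a h ≠ 0) with hA
  set P := Finset.univ.filter
      (fun p : Fin n × Fin n => p.1 < p.2 ∧ b p.1 p.2 ≠ 0) with hP
  set B := Finset.univ.filter (fun h : Fin n => ∃ j, b h j ≠ 0) with hB
  have hBsub : B ⊆ P.image Prod.fst ∪ P.image Prod.snd := by
    intro h hh
    simp only [hB, Finset.mem_filter, Finset.mem_univ, true_and] at hh
    obtain ⟨j, hj⟩ := hh
    have hne : h ≠ j := by
      intro e; subst e; exact hj (hbdiag h)
    rcases lt_or_gt_of_ne hne with hlt | hgt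
    · apply Finset.mem_union_left
      exact Finset.mem_image.2 ⟨(h, j), by simp [hP, hlt, hj], rfl⟩
    · apply Finset.mem_union_right
      refine Finset.mem_image.2 ⟨(j, h), by simp [hP, hgt, hbsymm j h ▸ hj], rfl⟩
  have hcardB : B.card ≤ 2 * P.card := by
    calc B.card ≤ (P.image Prod.fst ∪ P.image Prod.snd).card :=
          Finset.card_le_card hBsub
      _ ≤ (P.image Prod.fst).card + (P.image Prod.snd).card :=
          Finset.card_union_le _ _
      _ ≤ P.card + P.card := Nat.add_le_add (Finset.card_image_le) (Finset.card_image_le)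
      _ = 2 * P.card := (two_mul _).symm
  have hsmall : (A ∪ B).card < n := by
    calc (A ∪ B).card ≤ A.card + B.card := Finset.card_union_le _ _
      _ ≤ A.card + 2 * P.card := Nat.add_le_add_left hcardB _
      _ ≤ 2 * (A.card + P.card) := by omega
      _ ≤ 2 * k := by exact Nat.mul_le_mul_left 2 hcard
      _ < n := hnk
  have : ∃ h : Fin n, h ∉ A ∪ B := by
    by_contra hc
    push_neg at hc
    have : (Finset.univ : Finset (Fin n)).card ≤ (A ∪ B).card := by
      apply Finset.card_le_card
      intro x _; exact hc x
    simp [Finset.card_univ] at this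
    omega
  obtain ⟨h, hh⟩ := this
  rw [Finset.mem_union, not_or] at hh
  have ha : a h = 0 := by
    by_contra hc; exact hh.1 (by simp [hA, hc])
  have hb : ∀ j, b h j = 0 := by
    intro j
    by_contra hc
    apply hh.2
    rw [hB, Finset.mem_filter]
    exact ⟨Finset.mem_univ h, j, hc⟩
  have := heq h
  rw [ha, Finset.sum_congr rfl (fun j _ => hb j)] at this
  simp at this
  linarith
end

section
/- Let n ≥ 1 and let P := 1 + Σ_{α=1}^n X_αY_α be a polynomial over ℂ in the 2n variables X_1,…,X_n,Y_1,…,Y_n. Then det M(P) = P^{n−1}. -/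
open MvPolynomial

theorem fubini_study_monge_ampere (n : ℕ) (hn : 1 ≤ n)
    (P : MvPolynomial (Fin n ⊕ Fin n) ℂ)
    (hP : P = 1 + ∑ α : Fin n, X (Sum.inl α) * X (Sum.inr α)) :
    Matrix.det (metricMatrix n P) = P ^ (n - 1) := by
  have hM : metricMatrix n P = P • (1 : Matrix (Fin n) (Fin n) (MvPolynomial (Fin n ⊕ Fin n) ℂ))
      - Matrix.replicateCol Unit (fun i : Fin n => (X (Sum.inr i) : MvPolynomial (Fin n ⊕ Fin n) ℂ)) * Matrix.replicateRow Unit (fun i : Fin n => (X (Sum.inl i) : MvPolynomial (Fin n ⊕ Fin n) ℂ)) := by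
    ext α β
    have h1 : pderiv (Sum.inr β) P = X (Sum.inl β) := by
      subst hP; simp [pderiv_X, Pi.single_apply]
    have h2 : pderiv (Sum.inl α) P = X (Sum.inr α) := by
      subst hP; simp [pderiv_X, Pi.single_apply, mul_comm]
    have h3 : pderiv (Sum.inl α) (X (Sum.inl β) : MvPolynomial (Fin n ⊕ Fin n) ℂ)
        = if α = β then 1 else 0 := by
      simp [pderiv_X, Pi.single_apply, eq_comm]
    simp [metricMatrix, h1, h2, h3, Matrix.mul_apply, Matrix.one_apply, Matrix.sub_apply,
      Matrix.smul_apply, smul_eq_mul, mul_ite]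
  set S : MvPolynomial (Fin n ⊕ Fin n) ℂ := ∑ α : Fin n, X (Sum.inl α) * X (Sum.inr α) with hS
  have hrc : Matrix.replicateRow Unit (fun i => (X (Sum.inl i) : MvPolynomial (Fin n ⊕ Fin n) ℂ))
      * Matrix.replicateCol Unit (fun i : Fin n => (X (Sum.inr i) : MvPolynomial (Fin n ⊕ Fin n) ℂ))
      = S • (1 : Matrix Unit Unit (MvPolynomial (Fin n ⊕ Fin n) ℂ)) := by
    rw [Matrix.replicateRow_mul_replicateCol]
    ext i j
    simp [Matrix.one_apply, dotProduct, hS]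
  have hAB : metricMatrix n P * (1 + Matrix.replicateCol Unit (fun i : Fin n => (X (Sum.inr i) : MvPolynomial (Fin n ⊕ Fin n) ℂ))
      * Matrix.replicateRow Unit (fun i : Fin n => (X (Sum.inl i) : MvPolynomial (Fin n ⊕ Fin n) ℂ))) = P • 1 := by
    rw [hM, Matrix.sub_mul, Matrix.mul_add, Matrix.mul_add, Matrix.mul_one, Matrix.mul_one,
      Matrix.smul_mul, Matrix.one_mul, Matrix.mul_assoc, ← Matrix.mul_assoc (Matrix.replicateRow Unit _),
      hrc, Matrix.smul_mul, Matrix.one_mul, Matrix.mul_smul, hP]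
    module
  have hdetB : Matrix.det (1 + Matrix.replicateCol Unit (fun i : Fin n => (X (Sum.inr i) : MvPolynomial (Fin n ⊕ Fin n) ℂ))
      * Matrix.replicateRow Unit (fun i : Fin n => (X (Sum.inl i) : MvPolynomial (Fin n ⊕ Fin n) ℂ))) = P := by
    rw [Matrix.det_one_add_replicateCol_mul_replicateRow, hP, hS]
    simp [dotProduct]
  have hdet : Matrix.det (metricMatrix n P) * P = P ^ n := by
    have h := congrArg Matrix.det hAB
    rwa [Matrix.det_mul, hdetB, Matrix.det_smul, Matrix.det_one, mul_one,
      Fintype.card_fin] at h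
  have hP0 : P ≠ 0 := by
    intro h
    rw [h] at hP
    have := congrArg MvPolynomial.constantCoeff hP
    simp [hS] at this
  have key : Matrix.det (metricMatrix n P) * P = P ^ (n - 1) * P := by
    rw [hdet, ← pow_succ, Nat.sub_add_cancel hn]
  exact mul_right_cancel₀ hP0 key
end

section
/- Let n = 2, let Q := 1 + (X₁Y₁ + X₂Y₂)/2 and P := Q² be polynomials over ℂ in the variables X₁, X₂, Y₁, Y₂. Then det M(P) = Q⁵, i.e., (det M(P))² = P⁵. -/
open MvPolynomial

theorem twice_fubini_study_monge_ampere
    (Q P : MvPolynomial (Fin 2 ⊕ Fin 2) ℂ)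
    (hQ : Q = 1 + C (1 / 2 : ℂ) *
        (X (Sum.inl 0) * X (Sum.inr 0) + X (Sum.inl 1) * X (Sum.inr 1)))
    (hP : P = Q ^ 2) :
    Matrix.det (metricMatrix 2 P) = Q ^ 5 ∧
      (Matrix.det (metricMatrix 2 P)) ^ 2 = P ^ 5 := by
  have dQ : ∀ i j : Fin 2 ⊕ Fin 2, pderiv i (X j : MvPolynomial (Fin 2 ⊕ Fin 2) ℂ) =
      if i = j then 1 else 0 := by
    intro i j
    split
    · subst ‹i = j›; exact pderiv_X_self i
    · exact pderiv_X_of_ne (Ne.symm ‹i ≠ j›)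
  have hX0 : pderiv (Sum.inl 0) Q = C (1/2 : ℂ) * X (Sum.inr 0) := by rw [hQ]; simp [dQ]
  have hX1 : pderiv (Sum.inl 1) Q = C (1/2 : ℂ) * X (Sum.inr 1) := by rw [hQ]; simp [dQ]
  have hY0 : pderiv (Sum.inr 0) Q = C (1/2 : ℂ) * X (Sum.inl 0) := by rw [hQ]; simp [dQ]
  have hY1 : pderiv (Sum.inr 1) Q = C (1/2 : ℂ) * X (Sum.inl 1) := by rw [hQ]; simp [dQ]
  have hXY : ∀ (a b : Fin 2), pderiv (Sum.inl a) (pderiv (Sum.inr b) Q) =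
      if a = b then C (1/2 : ℂ) else 0 := by
    intro a b
    fin_cases a <;> fin_cases b <;> simp [hY0, hY1, dQ]
  have hP2 : P = Q * Q := by rw [hP]; ring
  have entry : ∀ a b : Fin 2, metricMatrix 2 P a b =
      2 * Q^2 * (Q * (if a = b then C (1/2 : ℂ) else 0)
        - (C (1/2 : ℂ) * X (Sum.inr a)) * (C (1/2 : ℂ) * X (Sum.inl b))) := by
    intro a b
    have dXP : pderiv (Sum.inl a) P
        = pderiv (Sum.inl a) Q * Q + Q * pderiv (Sum.inl a) Q := by
      rw [hP2, pderiv_mul]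
    have dYP : pderiv (Sum.inr b) P
        = pderiv (Sum.inr b) Q * Q + Q * pderiv (Sum.inr b) Q := by
      rw [hP2, pderiv_mul]
    have dXYP : pderiv (Sum.inl a) (pderiv (Sum.inr b) P) =
        2 * (pderiv (Sum.inl a) Q * pderiv (Sum.inr b) Q
          + Q * pderiv (Sum.inl a) (pderiv (Sum.inr b) Q)) := by
      rw [dYP, map_add, pderiv_mul, pderiv_mul]
      ring
    have hA : pderiv (Sum.inl a) Q = C (1/2 : ℂ) * X (Sum.inr a) := by
      fin_cases a <;> [exact hX0; exact hX1]
    have hB : pderiv (Sum.inr b) Q = C (1/2 : ℂ) * X (Sum.inl b) := by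
      fin_cases b <;> [exact hY0; exact hY1]
    show P * pderiv (Sum.inl a) (pderiv (Sum.inr b) P)
        - pderiv (Sum.inl a) P * pderiv (Sum.inr b) P = _
    rw [dXYP, hXY, dXP, dYP, hA, hB, hP]
    ring
  have hc : (C (1/2 : ℂ) : MvPolynomial (Fin 2 ⊕ Fin 2) ℂ) * 2 = 1 := by
    rw [← map_ofNat (C : ℂ →+* MvPolynomial (Fin 2 ⊕ Fin 2) ℂ) 2, ← C_mul]
    norm_num
  have e00 : metricMatrix 2 P 0 0 = 2 * Q^2 * (Q * C (1/2 : ℂ)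
      - (C (1/2 : ℂ) * X (Sum.inr 0)) * (C (1/2 : ℂ) * X (Sum.inl 0))) := by
    rw [entry]; norm_num
  have e11 : metricMatrix 2 P 1 1 = 2 * Q^2 * (Q * C (1/2 : ℂ)
      - (C (1/2 : ℂ) * X (Sum.inr 1)) * (C (1/2 : ℂ) * X (Sum.inl 1))) := by
    rw [entry]; norm_num
  have e01 : metricMatrix 2 P 0 1 = 2 * Q^2 * (0
      - (C (1/2 : ℂ) * X (Sum.inr 0)) * (C (1/2 : ℂ) * X (Sum.inl 1))) := by
    rw [entry]; norm_num
  have e10 : metricMatrix 2 P 1 0 = 2 * Q^2 * (0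
      - (C (1/2 : ℂ) * X (Sum.inr 1)) * (C (1/2 : ℂ) * X (Sum.inl 0))) := by
    rw [entry]; norm_num
  have hdet : Matrix.det (metricMatrix 2 P) = Q ^ 5 := by
    rw [Matrix.det_fin_two, e00, e11, e01, e10]
    linear_combination (4 * C (1/2 : ℂ)^2 * Q^5) * hQ
      + (Q^5 * (2 * C (1/2 : ℂ) + 1)) * hc
  exact ⟨hdet, by rw [hdet, hP]; ring⟩
end

section
/- Let a₁, a₂, b be positive real numbers and let P := 1 + X₁Y₁ + X₂Y₂ + a₁X₁²Y₁² + a₂X₂²Y₂² + b·X₁Y₁X₂Y₂ be a polynomial over ℂ (with n = 2) in the variables X₁, X₂, Y₁, Y₂. If there exist positive integers r and s with (det M(P))^s = P^r, then a₁ = a₂ = 1/4, b = 1/2, and 2r = 5s. -/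
open MvPolynomial

namespace DimTwoAux

/-- coefficients 0,1,2 of a power of a polynomial with constant term 1 and
no linear term. -/
lemma coeff_pow_low (f : Polynomial ℂ) (h0 : f.coeff 0 = 1) (h1 : f.coeff 1 = 0) :
    ∀ n : ℕ, (f ^ n).coeff 0 = 1 ∧ (f ^ n).coeff 1 = 0 ∧
      (f ^ n).coeff 2 = (n : ℂ) * f.coeff 2 := by
  intro n
  induction n with
  | zero => simp [Polynomial.coeff_one]
  | succ n ih =>
    obtain ⟨i0, i1, i2⟩ := ih
    rw [pow_succ]
    refine ⟨?_, ?_, ?_⟩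
    · rw [Polynomial.mul_coeff_zero, i0, h0, one_mul]
    · rw [Polynomial.coeff_mul, Finset.Nat.sum_antidiagonal_eq_sum_range_succ_mk,
        Finset.sum_range_succ, Finset.sum_range_succ, Finset.sum_range_zero]
      simp [i0, i1, h1]
    · rw [Polynomial.coeff_mul, Finset.Nat.sum_antidiagonal_eq_sum_range_succ_mk,
        Finset.sum_range_succ, Finset.sum_range_succ, Finset.sum_range_succ,
        Finset.sum_range_zero]
      simp only [zero_add, i0, i1, i2, h0, h1, Nat.cast_succ, mul_zero, zero_mul, add_zero,
        mul_one, one_mul]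
      push_cast
      ring

section Derivs

variable (a₁ a₂ b : ℂ) (P : MvPolynomial (Fin 2 ⊕ Fin 2) ℂ)

/-- the no-`pow` form of `P`. -/
lemma pderiv_two (i : Fin 2 ⊕ Fin 2) :
    pderiv i (2 : MvPolynomial (Fin 2 ⊕ Fin 2) ℂ) = 0 := by
  rw [show (2 : MvPolynomial (Fin 2 ⊕ Fin 2) ℂ) = C 2 from (map_ofNat C 2).symm, pderiv_C]

/-- the no-`pow` form of `P`. -/
lemma hP' (hP : P = 1 + X (Sum.inl 0) * X (Sum.inr 0) + X (Sum.inl 1) * X (Sum.inr 1)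
        + C (a₁ : ℂ) * (X (Sum.inl 0)) ^ 2 * (X (Sum.inr 0)) ^ 2
        + C (a₂ : ℂ) * (X (Sum.inl 1)) ^ 2 * (X (Sum.inr 1)) ^ 2
        + C (b : ℂ) * (X (Sum.inl 0) * X (Sum.inr 0) * X (Sum.inl 1) * X (Sum.inr 1))) :
    P = 1 + X (Sum.inl 0) * X (Sum.inr 0) + X (Sum.inl 1) * X (Sum.inr 1)
        + C (a₁ : ℂ) * (X (Sum.inl 0) * X (Sum.inl 0)) * (X (Sum.inr 0) * X (Sum.inr 0))
        + C (a₂ : ℂ) * (X (Sum.inl 1) * X (Sum.inl 1)) * (X (Sum.inr 1) * X (Sum.inr 1))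
        + C (b : ℂ) * (X (Sum.inl 0) * X (Sum.inr 0) * X (Sum.inl 1) * X (Sum.inr 1)) := by
  rw [hP]; ring

variable (hP : P = 1 + X (Sum.inl 0) * X (Sum.inr 0) + X (Sum.inl 1) * X (Sum.inr 1)
        + C (a₁ : ℂ) * (X (Sum.inl 0) * X (Sum.inl 0)) * (X (Sum.inr 0) * X (Sum.inr 0))
        + C (a₂ : ℂ) * (X (Sum.inl 1) * X (Sum.inl 1)) * (X (Sum.inr 1) * X (Sum.inr 1))
        + C (b : ℂ) * (X (Sum.inl 0) * X (Sum.inr 0) * X (Sum.inl 1) * X (Sum.inr 1)))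

include hP

lemma d0 : pderiv (Sum.inr 0) P
    = X (Sum.inl 0) + 2 * C a₁ * (X (Sum.inl 0) * X (Sum.inl 0)) * X (Sum.inr 0)
      + C b * (X (Sum.inl 0) * X (Sum.inl 1) * X (Sum.inr 1)) := by
  rw [hP]
  simp only [map_add, map_one, pderiv_mul, pderiv_two, pderiv_X_self, pderiv_X_of_ne, pderiv_C, pderiv_one,
    (by decide : (0:Fin 2) ≠ 1), (by decide : (1:Fin 2) ≠ 0),
    ne_eq, Sum.inl.injEq, Sum.inr.injEq, reduceCtorEq, not_false_eq_true,
    mul_zero, zero_mul, add_zero, zero_add, mul_one, one_mul]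
  ring

lemma d1 : pderiv (Sum.inr 1) P
    = X (Sum.inl 1) + 2 * C a₂ * (X (Sum.inl 1) * X (Sum.inl 1)) * X (Sum.inr 1)
      + C b * (X (Sum.inl 0) * X (Sum.inr 0) * X (Sum.inl 1)) := by
  rw [hP]
  simp only [map_add, map_one, pderiv_mul, pderiv_two, pderiv_X_self, pderiv_X_of_ne, pderiv_C, pderiv_one,
    (by decide : (0:Fin 2) ≠ 1), (by decide : (1:Fin 2) ≠ 0),
    ne_eq, Sum.inl.injEq, Sum.inr.injEq, reduceCtorEq, not_false_eq_true,
    mul_zero, zero_mul, add_zero, zero_add, mul_one, one_mul]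
  ring

lemma f0 : pderiv (Sum.inl 0) P
    = X (Sum.inr 0) + 2 * C a₁ * X (Sum.inl 0) * (X (Sum.inr 0) * X (Sum.inr 0))
      + C b * (X (Sum.inr 0) * X (Sum.inl 1) * X (Sum.inr 1)) := by
  rw [hP]
  simp only [map_add, map_one, pderiv_mul, pderiv_two, pderiv_X_self, pderiv_X_of_ne, pderiv_C, pderiv_one,
    (by decide : (0:Fin 2) ≠ 1), (by decide : (1:Fin 2) ≠ 0),
    ne_eq, Sum.inl.injEq, Sum.inr.injEq, reduceCtorEq, not_false_eq_true,
    mul_zero, zero_mul, add_zero, zero_add, mul_one, one_mul]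
  ring

lemma f1 : pderiv (Sum.inl 1) P
    = X (Sum.inr 1) + 2 * C a₂ * X (Sum.inl 1) * (X (Sum.inr 1) * X (Sum.inr 1))
      + C b * (X (Sum.inl 0) * X (Sum.inr 0) * X (Sum.inr 1)) := by
  rw [hP]
  simp only [map_add, map_one, pderiv_mul, pderiv_two, pderiv_X_self, pderiv_X_of_ne, pderiv_C, pderiv_one,
    (by decide : (0:Fin 2) ≠ 1), (by decide : (1:Fin 2) ≠ 0),
    ne_eq, Sum.inl.injEq, Sum.inr.injEq, reduceCtorEq, not_false_eq_true,
    mul_zero, zero_mul, add_zero, zero_add, mul_one, one_mul]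
  ring

lemma e00 : pderiv (Sum.inl 0) (pderiv (Sum.inr 0) P)
    = 1 + 4 * C a₁ * (X (Sum.inl 0) * X (Sum.inr 0)) + C b * (X (Sum.inl 1) * X (Sum.inr 1)) := by
  rw [d0 a₁ a₂ b P hP]
  simp only [map_add, map_one, pderiv_mul, pderiv_two, pderiv_X_self, pderiv_X_of_ne, pderiv_C, pderiv_one,
    (by decide : (0:Fin 2) ≠ 1), (by decide : (1:Fin 2) ≠ 0),
    ne_eq, Sum.inl.injEq, Sum.inr.injEq, reduceCtorEq, not_false_eq_true,
    mul_zero, zero_mul, add_zero, zero_add, mul_one, one_mul]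
  ring

lemma e10 : pderiv (Sum.inl 1) (pderiv (Sum.inr 0) P)
    = C b * (X (Sum.inl 0) * X (Sum.inr 1)) := by
  rw [d0 a₁ a₂ b P hP]
  simp only [map_add, map_one, pderiv_mul, pderiv_two, pderiv_X_self, pderiv_X_of_ne, pderiv_C, pderiv_one,
    (by decide : (0:Fin 2) ≠ 1), (by decide : (1:Fin 2) ≠ 0),
    ne_eq, Sum.inl.injEq, Sum.inr.injEq, reduceCtorEq, not_false_eq_true,
    mul_zero, zero_mul, add_zero, zero_add, mul_one, one_mul]

lemma e01 : pderiv (Sum.inl 0) (pderiv (Sum.inr 1) P)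
    = C b * (X (Sum.inr 0) * X (Sum.inl 1)) := by
  rw [d1 a₁ a₂ b P hP]
  simp only [map_add, map_one, pderiv_mul, pderiv_two, pderiv_X_self, pderiv_X_of_ne, pderiv_C, pderiv_one,
    (by decide : (0:Fin 2) ≠ 1), (by decide : (1:Fin 2) ≠ 0),
    ne_eq, Sum.inl.injEq, Sum.inr.injEq, reduceCtorEq, not_false_eq_true,
    mul_zero, zero_mul, add_zero, zero_add, mul_one, one_mul]

lemma e11 : pderiv (Sum.inl 1) (pderiv (Sum.inr 1) P)
    = 1 + 4 * C a₂ * (X (Sum.inl 1) * X (Sum.inr 1)) + C b * (X (Sum.inl 0) * X (Sum.inr 0)) := by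
  rw [d1 a₁ a₂ b P hP]
  simp only [map_add, map_one, pderiv_mul, pderiv_two, pderiv_X_self, pderiv_X_of_ne, pderiv_C, pderiv_one,
    (by decide : (0:Fin 2) ≠ 1), (by decide : (1:Fin 2) ≠ 0),
    ne_eq, Sum.inl.injEq, Sum.inr.injEq, reduceCtorEq, not_false_eq_true,
    mul_zero, zero_mul, add_zero, zero_add, mul_one, one_mul]
  ring

lemma detEq : Matrix.det (metricMatrix 2 P) =
    (P * (1 + 4 * C a₁ * (X (Sum.inl 0) * X (Sum.inr 0)) + C b * (X (Sum.inl 1) * X (Sum.inr 1)))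
      - (X (Sum.inr 0) + 2 * C a₁ * X (Sum.inl 0) * (X (Sum.inr 0) * X (Sum.inr 0))
          + C b * (X (Sum.inr 0) * X (Sum.inl 1) * X (Sum.inr 1)))
        * (X (Sum.inl 0) + 2 * C a₁ * (X (Sum.inl 0) * X (Sum.inl 0)) * X (Sum.inr 0)
          + C b * (X (Sum.inl 0) * X (Sum.inl 1) * X (Sum.inr 1))))
    * (P * (1 + 4 * C a₂ * (X (Sum.inl 1) * X (Sum.inr 1)) + C b * (X (Sum.inl 0) * X (Sum.inr 0)))
      - (X (Sum.inr 1) + 2 * C a₂ * X (Sum.inl 1) * (X (Sum.inr 1) * X (Sum.inr 1))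
          + C b * (X (Sum.inl 0) * X (Sum.inr 0) * X (Sum.inr 1)))
        * (X (Sum.inl 1) + 2 * C a₂ * (X (Sum.inl 1) * X (Sum.inl 1)) * X (Sum.inr 1)
          + C b * (X (Sum.inl 0) * X (Sum.inr 0) * X (Sum.inl 1))))
    - (P * (C b * (X (Sum.inr 0) * X (Sum.inl 1)))
      - (X (Sum.inr 0) + 2 * C a₁ * X (Sum.inl 0) * (X (Sum.inr 0) * X (Sum.inr 0))
          + C b * (X (Sum.inr 0) * X (Sum.inl 1) * X (Sum.inr 1)))
        * (X (Sum.inl 1) + 2 * C a₂ * (X (Sum.inl 1) * X (Sum.inl 1)) * X (Sum.inr 1)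
          + C b * (X (Sum.inl 0) * X (Sum.inr 0) * X (Sum.inl 1))))
    * (P * (C b * (X (Sum.inl 0) * X (Sum.inr 1)))
      - (X (Sum.inr 1) + 2 * C a₂ * X (Sum.inl 1) * (X (Sum.inr 1) * X (Sum.inr 1))
          + C b * (X (Sum.inl 0) * X (Sum.inr 0) * X (Sum.inr 1)))
        * (X (Sum.inl 0) + 2 * C a₁ * (X (Sum.inl 0) * X (Sum.inl 0)) * X (Sum.inr 0)
          + C b * (X (Sum.inl 0) * X (Sum.inl 1) * X (Sum.inr 1)))) := by
  rw [Matrix.det_fin_two]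
  simp only [metricMatrix]
  rw [e00 a₁ a₂ b P hP, e01 a₁ a₂ b P hP, e10 a₁ a₂ b P hP, e11 a₁ a₂ b P hP,
    f0 a₁ a₂ b P hP, f1 a₁ a₂ b P hP, d0 a₁ a₂ b P hP, d1 a₁ a₂ b P hP]


lemma line1 :
    aeval (Sum.elim ![Polynomial.X, 0] ![Polynomial.X, 0]) (Matrix.det (metricMatrix 2 P))
      = Polynomial.C 1 + Polynomial.C (1 + b + 4*a₁) * Polynomial.X ^ 2
        + Polynomial.C (b + 6*a₁ + 4*a₁*b) * Polynomial.X ^ 4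
        + Polynomial.C (a₁ + 6*a₁*b + 4*a₁^2) * Polynomial.X ^ 6
        + Polynomial.C (a₁*b + a₁^2 + 4*a₁^2*b) * Polynomial.X ^ 8
        + Polynomial.C (a₁^2*b) * Polynomial.X ^ 10 := by
  rw [detEq a₁ a₂ b P hP, hP]
  simp only [map_add, map_sub, map_mul, map_one, map_ofNat, map_pow, aeval_X, aeval_C,
    Sum.elim_inl, Sum.elim_inr, Matrix.cons_val_zero, Matrix.cons_val_one, Matrix.head_cons,
    Polynomial.algebraMap_eq, mul_zero, zero_mul, add_zero, zero_add, mul_one, one_mul]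
  ring

lemma lineP1 :
    aeval (Sum.elim ![Polynomial.X, 0] ![Polynomial.X, 0]) P
      = Polynomial.C 1 + Polynomial.C 1 * Polynomial.X ^ 2
        + Polynomial.C a₁ * Polynomial.X ^ 4 := by
  rw [hP]
  simp only [map_add, map_sub, map_mul, map_one, map_ofNat, map_pow, aeval_X, aeval_C,
    Sum.elim_inl, Sum.elim_inr, Matrix.cons_val_zero, Matrix.cons_val_one, Matrix.head_cons,
    Polynomial.algebraMap_eq, mul_zero, zero_mul, add_zero, zero_add, mul_one, one_mul]
  ring

lemma line2 :
    aeval (Sum.elim ![0, Polynomial.X] ![0, Polynomial.X]) (Matrix.det (metricMatrix 2 P))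
      = Polynomial.C 1 + Polynomial.C (1 + b + 4*a₂) * Polynomial.X ^ 2
        + Polynomial.C (b + 6*a₂ + 4*a₂*b) * Polynomial.X ^ 4
        + Polynomial.C (a₂ + 6*a₂*b + 4*a₂^2) * Polynomial.X ^ 6
        + Polynomial.C (a₂*b + a₂^2 + 4*a₂^2*b) * Polynomial.X ^ 8
        + Polynomial.C (a₂^2*b) * Polynomial.X ^ 10 := by
  rw [detEq a₁ a₂ b P hP, hP]
  simp only [map_add, map_sub, map_mul, map_one, map_ofNat, map_pow, aeval_X, aeval_C,
    Sum.elim_inl, Sum.elim_inr, Matrix.cons_val_zero, Matrix.cons_val_one, Matrix.head_cons,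
    Polynomial.algebraMap_eq, mul_zero, zero_mul, add_zero, zero_add, mul_one, one_mul]
  ring

lemma lineP2 :
    aeval (Sum.elim ![0, Polynomial.X] ![0, Polynomial.X]) P
      = Polynomial.C 1 + Polynomial.C 1 * Polynomial.X ^ 2
        + Polynomial.C a₂ * Polynomial.X ^ 4 := by
  rw [hP]
  simp only [map_add, map_sub, map_mul, map_one, map_ofNat, map_pow, aeval_X, aeval_C,
    Sum.elim_inl, Sum.elim_inr, Matrix.cons_val_zero, Matrix.cons_val_one, Matrix.head_cons,
    Polynomial.algebraMap_eq, mul_zero, zero_mul, add_zero, zero_add, mul_one, one_mul]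
  ring

end Derivs

end DimTwoAux

theorem dim_two_codim_three_all_nonzero (a₁ a₂ b : ℝ)
    (ha₁ : 0 < a₁) (ha₂ : 0 < a₂) (hb : 0 < b)
    (P : MvPolynomial (Fin 2 ⊕ Fin 2) ℂ)
    (hP : P = 1 + X (Sum.inl 0) * X (Sum.inr 0) + X (Sum.inl 1) * X (Sum.inr 1)
        + C (a₁ : ℂ) * (X (Sum.inl 0)) ^ 2 * (X (Sum.inr 0)) ^ 2
        + C (a₂ : ℂ) * (X (Sum.inl 1)) ^ 2 * (X (Sum.inr 1)) ^ 2
        + C (b : ℂ) * (X (Sum.inl 0) * X (Sum.inr 0) * X (Sum.inl 1) * X (Sum.inr 1)))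
    (r s : ℕ) (hr : 0 < r) (hs : 0 < s)
    (hMA : (Matrix.det (metricMatrix 2 P)) ^ s = P ^ r) :
    a₁ = 1 / 4 ∧ a₂ = 1 / 4 ∧ b = 1 / 2 ∧ 2 * r = 5 * s := by
  have hQ := DimTwoAux.hP' (a₁ : ℂ) (a₂ : ℂ) (b : ℂ) P hP
  have hA1 : (a₁ : ℂ) ≠ 0 := by exact_mod_cast ha₁.ne'
  have hA2 : (a₂ : ℂ) ≠ 0 := by exact_mod_cast ha₂.ne'
  have hB : (b : ℂ) ≠ 0 := by exact_mod_cast hb.ne'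
  -- the two univariate specializations
  have h1 := congrArg (aeval (Sum.elim ![Polynomial.X, 0] ![Polynomial.X, 0]) :
      MvPolynomial (Fin 2 ⊕ Fin 2) ℂ →ₐ[ℂ] Polynomial ℂ) hMA
  have h2 := congrArg (aeval (Sum.elim ![0, Polynomial.X] ![0, Polynomial.X]) :
      MvPolynomial (Fin 2 ⊕ Fin 2) ℂ →ₐ[ℂ] Polynomial ℂ) hMA
  rw [map_pow, map_pow, DimTwoAux.line1 _ _ _ P hQ, DimTwoAux.lineP1 _ _ _ P hQ] at h1
  rw [map_pow, map_pow, DimTwoAux.line2 _ _ _ P hQ, DimTwoAux.lineP2 _ _ _ P hQ] at h2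
  set F₁ : Polynomial ℂ :=
    Polynomial.C 1 + Polynomial.C (1 + (b:ℂ) + 4*(a₁:ℂ)) * Polynomial.X ^ 2
      + Polynomial.C ((b:ℂ) + 6*(a₁:ℂ) + 4*(a₁:ℂ)*(b:ℂ)) * Polynomial.X ^ 4
      + Polynomial.C ((a₁:ℂ) + 6*(a₁:ℂ)*(b:ℂ) + 4*(a₁:ℂ)^2) * Polynomial.X ^ 6
      + Polynomial.C ((a₁:ℂ)*(b:ℂ) + (a₁:ℂ)^2 + 4*(a₁:ℂ)^2*(b:ℂ)) * Polynomial.X ^ 8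
      + Polynomial.C ((a₁:ℂ)^2*(b:ℂ)) * Polynomial.X ^ 10 with hF₁def
  set F₂ : Polynomial ℂ :=
    Polynomial.C 1 + Polynomial.C (1 + (b:ℂ) + 4*(a₂:ℂ)) * Polynomial.X ^ 2
      + Polynomial.C ((b:ℂ) + 6*(a₂:ℂ) + 4*(a₂:ℂ)*(b:ℂ)) * Polynomial.X ^ 4
      + Polynomial.C ((a₂:ℂ) + 6*(a₂:ℂ)*(b:ℂ) + 4*(a₂:ℂ)^2) * Polynomial.X ^ 6
      + Polynomial.C ((a₂:ℂ)*(b:ℂ) + (a₂:ℂ)^2 + 4*(a₂:ℂ)^2*(b:ℂ)) * Polynomial.X ^ 8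
      + Polynomial.C ((a₂:ℂ)^2*(b:ℂ)) * Polynomial.X ^ 10 with hF₂def
  set G₁ : Polynomial ℂ :=
    Polynomial.C 1 + Polynomial.C 1 * Polynomial.X ^ 2
      + Polynomial.C (a₁:ℂ) * Polynomial.X ^ 4 with hG₁def
  set G₂ : Polynomial ℂ :=
    Polynomial.C 1 + Polynomial.C 1 * Polynomial.X ^ 2
      + Polynomial.C (a₂:ℂ) * Polynomial.X ^ 4 with hG₂def
  -- degrees
  have hdF₁ : F₁.natDegree = 10 := by
    rw [hF₁def]; compute_degree!
    exact ⟨ha₁.ne', hb.ne'⟩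
  have hdF₂ : F₂.natDegree = 10 := by
    rw [hF₂def]; compute_degree!
    exact ⟨ha₂.ne', hb.ne'⟩
  have hdG₁ : G₁.natDegree = 4 := by
    rw [hG₁def]; compute_degree!
    exact ha₁.ne'
  have hdG₂ : G₂.natDegree = 4 := by
    rw [hG₂def]; compute_degree!
    exact ha₂.ne'
  have hdeg : s * 10 = r * 4 := by
    have hd := congrArg Polynomial.natDegree h1
    rwa [Polynomial.natDegree_pow, Polynomial.natDegree_pow, hdF₁, hdG₁] at hd
  have h2r5s : 2 * r = 5 * s := by omega
  -- leading coefficients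
  have hlF₁ : F₁.leadingCoeff = (a₁:ℂ)^2*(b:ℂ) := by
    rw [Polynomial.leadingCoeff, hdF₁, hF₁def]
    simp only [Polynomial.coeff_add, Polynomial.coeff_C_mul, Polynomial.coeff_X_pow,
      Polynomial.coeff_C, Polynomial.coeff_one]
    norm_num
  have hlF₂ : F₂.leadingCoeff = (a₂:ℂ)^2*(b:ℂ) := by
    rw [Polynomial.leadingCoeff, hdF₂, hF₂def]
    simp only [Polynomial.coeff_add, Polynomial.coeff_C_mul, Polynomial.coeff_X_pow,
      Polynomial.coeff_C, Polynomial.coeff_one]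
    norm_num
  have hlG₁ : G₁.leadingCoeff = (a₁:ℂ) := by
    rw [Polynomial.leadingCoeff, hdG₁, hG₁def]
    simp only [Polynomial.coeff_add, Polynomial.coeff_C_mul, Polynomial.coeff_X_pow,
      Polynomial.coeff_C, Polynomial.coeff_one]
    norm_num
  have hlG₂ : G₂.leadingCoeff = (a₂:ℂ) := by
    rw [Polynomial.leadingCoeff, hdG₂, hG₂def]
    simp only [Polynomial.coeff_add, Polynomial.coeff_C_mul, Polynomial.coeff_X_pow,
      Polynomial.coeff_C, Polynomial.coeff_one]
    norm_num
  have hl1 : ((a₁:ℂ)^2*(b:ℂ))^s = (a₁:ℂ)^r := by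
    have hl := congrArg Polynomial.leadingCoeff h1
    rwa [Polynomial.leadingCoeff_pow, Polynomial.leadingCoeff_pow, hlF₁, hlG₁] at hl
  have hl2 : ((a₂:ℂ)^2*(b:ℂ))^s = (a₂:ℂ)^r := by
    have hl := congrArg Polynomial.leadingCoeff h2
    rwa [Polynomial.leadingCoeff_pow, Polynomial.leadingCoeff_pow, hlF₂, hlG₂] at hl
  -- coefficient of X^2
  have hF₁0 : F₁.coeff 0 = 1 := by
    rw [hF₁def]
    simp only [Polynomial.coeff_add, Polynomial.coeff_C_mul, Polynomial.coeff_X_pow,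
      Polynomial.coeff_C, Polynomial.coeff_one]
    norm_num
  have hF₁1 : F₁.coeff 1 = 0 := by
    rw [hF₁def]
    simp only [Polynomial.coeff_add, Polynomial.coeff_C_mul, Polynomial.coeff_X_pow,
      Polynomial.coeff_C, Polynomial.coeff_one]
    norm_num
  have hF₁2 : F₁.coeff 2 = 1 + (b:ℂ) + 4*(a₁:ℂ) := by
    rw [hF₁def]
    simp only [Polynomial.coeff_add, Polynomial.coeff_C_mul, Polynomial.coeff_X_pow,
      Polynomial.coeff_C, Polynomial.coeff_one]
    norm_num
  have hG₁0 : G₁.coeff 0 = 1 := by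
    rw [hG₁def]
    simp only [Polynomial.coeff_add, Polynomial.coeff_C_mul, Polynomial.coeff_X_pow,
      Polynomial.coeff_C, Polynomial.coeff_one]
    norm_num
  have hG₁1 : G₁.coeff 1 = 0 := by
    rw [hG₁def]
    simp only [Polynomial.coeff_add, Polynomial.coeff_C_mul, Polynomial.coeff_X_pow,
      Polynomial.coeff_C, Polynomial.coeff_one]
    norm_num
  have hG₁2 : G₁.coeff 2 = 1 := by
    rw [hG₁def]
    simp only [Polynomial.coeff_add, Polynomial.coeff_C_mul, Polynomial.coeff_X_pow,
      Polynomial.coeff_C, Polynomial.coeff_one]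
    norm_num
  have hc2 : (s : ℂ) * (1 + (b:ℂ) + 4*(a₁:ℂ)) = (r : ℂ) := by
    have hc := congrArg (fun q : Polynomial ℂ => q.coeff 2) h1
    rw [(DimTwoAux.coeff_pow_low F₁ hF₁0 hF₁1 s).2.2,
      (DimTwoAux.coeff_pow_low G₁ hG₁0 hG₁1 r).2.2, hF₁2, hG₁2, mul_one] at hc
    exact hc
  -- pass to the reals
  have hl1R : (a₁^2*b)^s = a₁^r := by exact_mod_cast hl1
  have hl2R : (a₂^2*b)^s = a₂^r := by exact_mod_cast hl2
  have hc2R : (s : ℝ) * (1 + b + 4*a₁) = (r : ℝ) := by exact_mod_cast hc2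
  -- real algebra
  have key1 : ((a₁^2*b)^2)^s = (a₁^5)^s := by
    calc ((a₁^2*b)^2)^s = ((a₁^2*b)^s)^2 := by rw [← pow_mul, mul_comm 2 s, pow_mul]
    _ = (a₁^r)^2 := by rw [hl1R]
    _ = a₁^(2*r) := by rw [← pow_mul, mul_comm]
    _ = a₁^(5*s) := by rw [h2r5s]
    _ = (a₁^5)^s := by rw [pow_mul]
  have key2 : ((a₂^2*b)^2)^s = (a₂^5)^s := by
    calc ((a₂^2*b)^2)^s = ((a₂^2*b)^s)^2 := by rw [← pow_mul, mul_comm 2 s, pow_mul]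
    _ = (a₂^r)^2 := by rw [hl2R]
    _ = a₂^(2*r) := by rw [← pow_mul, mul_comm]
    _ = a₂^(5*s) := by rw [h2r5s]
    _ = (a₂^5)^s := by rw [pow_mul]
  have e1 : (a₁^2*b)^2 = a₁^5 :=
    (pow_left_inj₀ (by positivity) (by positivity) hs.ne').mp key1
  have e2 : (a₂^2*b)^2 = a₂^5 :=
    (pow_left_inj₀ (by positivity) (by positivity) hs.ne').mp key2
  have hb2a1 : b^2 = a₁ := by
    have h4 : a₁^4 * b^2 = a₁^4 * a₁ := by ring_nf; ring_nf at e1; linear_combination e1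
    exact mul_left_cancel₀ (pow_ne_zero 4 ha₁.ne') h4
  have hb2a2 : b^2 = a₂ := by
    have h4 : a₂^4 * b^2 = a₂^4 * a₂ := by ring_nf; ring_nf at e2; linear_combination e2
    exact mul_left_cancel₀ (pow_ne_zero 4 ha₂.ne') h4
  have hsR : (0:ℝ) < (s:ℝ) := by exact_mod_cast hs
  have hrs : (2:ℝ) * r = 5 * s := by exact_mod_cast congrArg (Nat.cast : ℕ → ℝ) h2r5s
  have hfac : (s:ℝ) * ((2*b - 1) * (4*b + 3)) = 0 := by
    rw [← hb2a1] at hc2R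
    linear_combination 2 * hc2R + hrs
  have hbval : b = 1/2 := by
    rcases mul_eq_zero.mp hfac with h | h
    · exact absurd h hsR.ne'
    · rcases mul_eq_zero.mp h with h' | h'
      · linarith
      · linarith
  refine ⟨?_, ?_, hbval, h2r5s⟩
  · rw [← hb2a1, hbval]; norm_num
  · rw [← hb2a2, hbval]; norm_num
end

section
/- Let n, k, r, s be positive integers with 2k < n. Let P be a balanced polynomial over ℂ in the 2n variables X_1,…,X_n,Y_1,…,Y_n (every monomial in its support has, for each α, equal exponents of X_α and Y_α), with constant coefficient 1, with the coefficient of X_αY_α equal to 1 for every α, and with at most n + k + 1 monomials in its support. If (det M(P))^s = P^r, then r = (n − 1)·s; equivalently, the Einstein constant λ := 2(2n − r/s) equals 2(n + 1). -/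
open MvPolynomial

/-- A polynomial in the variables `X_1,…,X_n` (indexed by `Sum.inl`) and
`Y_1,…,Y_n` (indexed by `Sum.inr`) is balanced if every monomial in its
support has, for each index `α`, equal exponents of `X_α` and `Y_α`. -/
def IsBalanced (n : ℕ) (P : MvPolynomial (Fin n ⊕ Fin n) ℂ) : Prop :=
  ∀ m ∈ P.support, ∀ α : Fin n, m (Sum.inl α) = m (Sum.inr α)

namespace LCE
variable {n : ℕ}
noncomputable def mu (α : Fin n) : (Fin n ⊕ Fin n) →₀ ℕ :=
  Finsupp.single (Sum.inl α) 1 + Finsupp.single (Sum.inr α) 1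

lemma mu_inl (α β : Fin n) : mu α (Sum.inl β) = if α = β then 1 else 0 := by
  simp [mu, Finsupp.single_apply]

lemma mu_inr (α β : Fin n) : mu α (Sum.inr β) = if α = β then 1 else 0 := by
  simp [mu, Finsupp.single_apply]

lemma mu_ne_zero (α : Fin n) : mu α ≠ 0 := by
  intro h
  have := DFunLike.congr_fun h (Sum.inl α)
  simp [mu_inl] at this

lemma mu_injective : Function.Injective (mu (n := n)) := by
  intro a b h
  have := DFunLike.congr_fun h (Sum.inl b)
  rw [mu_inl, mu_inl, if_pos rfl] at this
  by_contra hne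
  rw [if_neg hne] at this
  exact zero_ne_one this

lemma mem_support_mu {α : Fin n} {i : Fin n ⊕ Fin n} (hi : mu α i ≠ 0) :
    i = Sum.inl α ∨ i = Sum.inr α := by
  rcases i with β | β
  · left; rw [mu_inl] at hi; by_contra h; rw [if_neg] at hi; · exact hi rfl
    rintro rfl; exact h rfl
  · right; rw [mu_inr] at hi; by_contra h; rw [if_neg] at hi; · exact hi rfl
    rintro rfl; exact h rfl

/-- index projection -/
def proj : Fin n ⊕ Fin n → Fin n := Sum.elim id id

def idx (m : (Fin n ⊕ Fin n) →₀ ℕ) : Finset (Fin n) := m.support.image proj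

/-- the substitution sending X_α, Y_α to x and all other variables to 0 -/
noncomputable def v (α : Fin n) : Fin n ⊕ Fin n → Polynomial ℂ :=
  fun i => if i = Sum.inl α ∨ i = Sum.inr α then Polynomial.X else 0

lemma phi_monomial_zero {α : Fin n} {m : (Fin n ⊕ Fin n) →₀ ℕ} (c : ℂ)
    (h : ¬ (m.support ⊆ {Sum.inl α, Sum.inr α})) :
    aeval (v α) (monomial m c) = 0 := by
  rw [Finset.not_subset] at h
  obtain ⟨i, hi, hni⟩ := h
  simp only [Finset.mem_insert, Finset.mem_singleton] at hni
  rw [aeval_monomial]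
  refine mul_eq_zero_of_right _ (Finset.prod_eq_zero hi ?_)
  show v α i ^ m i = 0
  rw [show v α i = 0 from if_neg hni]
  exact zero_pow (Finsupp.mem_support_iff.mp hi)

lemma phi_monomial_zero' {α : Fin n} {m : (Fin n ⊕ Fin n) →₀ ℕ} {c : ℂ}
    (h : aeval (v α) (monomial m c) ≠ 0) :
    m.support ⊆ {Sum.inl α, Sum.inr α} := by
  by_contra hc; exact h (phi_monomial_zero c hc)

lemma phi_monomial_C (α : Fin n) (c : ℂ) :
    aeval (v α) (monomial 0 c) = Polynomial.C c := by
  rw [monomial_zero']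
  rw [aeval_C, Polynomial.algebraMap_eq]

lemma phi_monomial_X (α : Fin n) :
    aeval (v α) (monomial (Finsupp.single (Sum.inl α) 1) (1 : ℂ)) = Polynomial.X := by
  rw [← MvPolynomial.X]
  simp [v]

lemma phi_monomial_Y (α : Fin n) :
    aeval (v α) (monomial (Finsupp.single (Sum.inr α) 1) (1 : ℂ)) = Polynomial.X := by
  rw [← MvPolynomial.X]
  simp [v]

lemma phi_monomial_mu (α : Fin n) :
    aeval (v α) (monomial (mu α) (1 : ℂ)) = Polynomial.X ^ 2 := by
  rw [show monomial (mu α) (1:ℂ) = monomial (Finsupp.single (Sum.inl α) 1) 1 *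
      monomial (Finsupp.single (Sum.inr α) 1) 1 by rw [monomial_mul, one_mul]; rfl]
  rw [map_mul, phi_monomial_X, phi_monomial_Y, sq]


lemma support_subset_insert (m : (Fin n ⊕ Fin n) →₀ ℕ) (i : Fin n ⊕ Fin n) :
    m.support ⊆ insert i (m - Finsupp.single i 1).support := by
  intro j hj
  by_cases h : j = i
  · exact Finset.mem_insert.mpr (Or.inl h)
  · refine Finset.mem_insert.mpr (Or.inr (Finsupp.mem_support_iff.mpr ?_))
    rw [Finsupp.tsub_apply, Finsupp.single_apply, if_neg (fun hh => h hh.symm), Nat.sub_zero]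
    exact Finsupp.mem_support_iff.mp hj

lemma sub_single_apply_ne (m : (Fin n ⊕ Fin n) →₀ ℕ) {i j : Fin n ⊕ Fin n} (h : i ≠ j) :
    (m - Finsupp.single i 1 : (Fin n ⊕ Fin n) →₀ ℕ) j = m j := by
  rw [Finsupp.tsub_apply, Finsupp.single_apply, if_neg h, Nat.sub_zero]

section main
variable {P : MvPolynomial (Fin n ⊕ Fin n) ℂ} {α : Fin n}

lemma key1 (hclean : ∀ m ∈ P.support, α ∈ idx m → (idx m).card ≤ 2 → m = mu α)
    {m : (Fin n ⊕ Fin n) →₀ ℕ} (hm : m ∈ P.support)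
    (hsub : m.support ⊆ ({Sum.inl α, Sum.inr α} : Finset (Fin n ⊕ Fin n))) :
    m = 0 ∨ m = mu α := by
  by_cases h0 : m = 0
  · exact Or.inl h0
  · refine Or.inr (hclean m hm ?_ ?_)
    · obtain ⟨i, hi⟩ := Finsupp.support_nonempty_iff.mpr h0
      have hi2 := hsub hi
      simp only [Finset.mem_insert, Finset.mem_singleton] at hi2
      refine Finset.mem_image.mpr ⟨i, hi, ?_⟩
      rcases hi2 with rfl | rfl <;> rfl
    · have : idx m ⊆ {α} := by
        intro γ hγ
        obtain ⟨i, hi, rfl⟩ := Finset.mem_image.mp hγ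
        have hi2 := hsub hi
        simp only [Finset.mem_insert, Finset.mem_singleton] at hi2
        rcases hi2 with rfl | rfl <;> simp [proj]
      calc (idx m).card ≤ ({α} : Finset (Fin n)).card := Finset.card_le_card this
        _ ≤ 2 := by simp

lemma phi_pderiv (i : Fin n ⊕ Fin n) :
    aeval (v α) (pderiv i P) = ∑ m ∈ P.support,
      aeval (v α) (monomial (m - Finsupp.single i 1) (coeff m P * (m i : ℂ))) := by
  conv_lhs => rw [P.as_sum]
  rw [map_sum, map_sum]
  exact Finset.sum_congr rfl fun m _ => by rw [pderiv_monomial]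

lemma phi_pderiv2 (i j : Fin n ⊕ Fin n) :
    aeval (v α) (pderiv i (pderiv j P)) = ∑ m ∈ P.support,
      aeval (v α) (monomial (m - Finsupp.single j 1 - Finsupp.single i 1)
        ((coeff m P * (m j : ℂ)) * ((m - Finsupp.single j 1 : (Fin n ⊕ Fin n) →₀ ℕ) i : ℂ))) := by
  conv_lhs => rw [P.as_sum]
  rw [map_sum, map_sum, map_sum]
  exact Finset.sum_congr rfl fun m _ => by rw [pderiv_monomial, pderiv_monomial]


lemma mem0 (hconst : coeff 0 P = 1) : (0 : (Fin n ⊕ Fin n) →₀ ℕ) ∈ P.support :=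
  mem_support_iff.mpr (by rw [hconst]; exact one_ne_zero)

lemma memmu (hlin : ∀ β : Fin n,
      coeff (Finsupp.single (Sum.inl β) 1 + Finsupp.single (Sum.inr β) 1) P = 1)
    (β : Fin n) : mu β ∈ P.support :=
  mem_support_iff.mpr (by rw [show coeff (mu β) P = 1 from hlin β]; exact one_ne_zero)

lemma support_chain {m : (Fin n ⊕ Fin n) →₀ ℕ} {i j : Fin n ⊕ Fin n}
    (h : (m - Finsupp.single j 1 - Finsupp.single i 1).support ⊆
      ({Sum.inl α, Sum.inr α} : Finset (Fin n ⊕ Fin n))) :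
    m.support ⊆ {j, i, Sum.inl α, Sum.inr α} := by
  refine (support_subset_insert m j).trans ?_
  intro x hx
  rcases Finset.mem_insert.mp hx with rfl | hx2
  · simp
  · have := (support_subset_insert _ i) hx2
    rcases Finset.mem_insert.mp this with rfl | hx3
    · simp
    · have := h hx3
      simp only [Finset.mem_insert, Finset.mem_singleton] at this ⊢
      tauto

lemma mu_apply_eq_zero {β : Fin n} {i : Fin n ⊕ Fin n} (h1 : i ≠ Sum.inl β)
    (h2 : i ≠ Sum.inr β) : mu β i = 0 := by
  rcases eq_or_ne (mu β i) 0 with h | h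
  · exact h
  · rcases mem_support_mu h with rfl | rfl
    · exact absurd rfl h1
    · exact absurd rfl h2

variable (hbal : IsBalanced n P)
  (hconst : coeff 0 P = 1)
  (hlin : ∀ β : Fin n,
    coeff (Finsupp.single (Sum.inl β) 1 + Finsupp.single (Sum.inr β) 1) P = 1)
  (hclean : ∀ m ∈ P.support, α ∈ idx m → (idx m).card ≤ 2 → m = mu α)

include hconst hlin hclean in
lemma phiP : aeval (v α) P = 1 + Polynomial.X ^ 2 := by
  conv_lhs => rw [P.as_sum]
  rw [map_sum]
  have hsub : ({0, mu α} : Finset ((Fin n ⊕ Fin n) →₀ ℕ)) ⊆ P.support := by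
    refine Finset.insert_subset (mem0 hconst) ?_
    simpa using memmu hlin α
  have hvan : ∀ m ∈ P.support, m ∉ ({0, mu α} : Finset ((Fin n ⊕ Fin n) →₀ ℕ)) →
      aeval (v α) (monomial m (coeff m P)) = 0 := by
    intro m hm hne
    simp only [Finset.mem_insert, Finset.mem_singleton, not_or] at hne
    apply phi_monomial_zero
    intro hsub'
    rcases key1 hclean hm hsub' with rfl | rfl
    · exact hne.1 rfl
    · exact hne.2 rfl
  rw [← Finset.sum_subset hsub hvan, Finset.sum_pair (Ne.symm (mu_ne_zero α)),
    hconst, show coeff (mu α) P = 1 from hlin α, phi_monomial_C, phi_monomial_mu,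
    Polynomial.C_1]

include hbal in
lemma phi_dX_ne {β : Fin n} (hβ : β ≠ α) :
    aeval (v α) (pderiv (Sum.inl β) P) = 0 := by
  rw [phi_pderiv]
  refine Finset.sum_eq_zero fun m hm => ?_
  by_cases h1 : m (Sum.inl β) = 0
  · rw [h1, Nat.cast_zero, mul_zero, monomial_zero, map_zero]
  · apply phi_monomial_zero
    intro hsub'
    have hmem : Sum.inr β ∈ (m - Finsupp.single (Sum.inl β) 1).support := by
      rw [Finsupp.mem_support_iff, sub_single_apply_ne m (by simp)]
      rw [← hbal m hm β]; exact h1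
    have := hsub' hmem
    simp only [Finset.mem_insert, Finset.mem_singleton] at this
    rcases this with h | h
    · simp at h
    · exact hβ (Sum.inr.inj h)

include hbal in
lemma phi_dY_ne {β : Fin n} (hβ : β ≠ α) :
    aeval (v α) (pderiv (Sum.inr β) P) = 0 := by
  rw [phi_pderiv]
  refine Finset.sum_eq_zero fun m hm => ?_
  by_cases h1 : m (Sum.inr β) = 0
  · rw [h1, Nat.cast_zero, mul_zero, monomial_zero, map_zero]
  · apply phi_monomial_zero
    intro hsub'
    have hmem : Sum.inl β ∈ (m - Finsupp.single (Sum.inr β) 1).support := by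
      rw [Finsupp.mem_support_iff, sub_single_apply_ne m (by simp)]
      rw [hbal m hm β]; exact h1
    have := hsub' hmem
    simp only [Finset.mem_insert, Finset.mem_singleton] at this
    rcases this with h | h
    · exact hβ (Sum.inl.inj h)
    · simp at h

include hlin hclean in
lemma phi_dX_self : aeval (v α) (pderiv (Sum.inl α) P) = Polynomial.X := by
  rw [phi_pderiv]
  have hsub : ({mu α} : Finset ((Fin n ⊕ Fin n) →₀ ℕ)) ⊆ P.support := by
    simpa using memmu hlin α
  have hvan : ∀ m ∈ P.support, m ∉ ({mu α} : Finset ((Fin n ⊕ Fin n) →₀ ℕ)) →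
      aeval (v α) (monomial (m - Finsupp.single (Sum.inl α) 1)
        (coeff m P * (m (Sum.inl α) : ℂ))) = 0 := by
    intro m hm hne
    rw [Finset.mem_singleton] at hne
    by_cases h1 : m (Sum.inl α) = 0
    · rw [h1, Nat.cast_zero, mul_zero, monomial_zero, map_zero]
    · apply phi_monomial_zero
      intro hsub'
      have hsupp : m.support ⊆ ({Sum.inl α, Sum.inr α} : Finset (Fin n ⊕ Fin n)) := by
        refine (support_subset_insert m (Sum.inl α)).trans ?_
        exact Finset.insert_subset (by simp) hsub'
      rcases key1 hclean hm hsupp with rfl | rfl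
      · exact h1 rfl
      · exact hne rfl
  rw [← Finset.sum_subset hsub hvan, Finset.sum_singleton,
    show coeff (mu α) P = 1 from hlin α,
    show mu α - Finsupp.single (Sum.inl α) 1 = Finsupp.single (Sum.inr α) 1 from
      add_tsub_cancel_left _ _,
    show mu α (Sum.inl α) = 1 by rw [mu_inl, if_pos rfl],
    Nat.cast_one, mul_one, phi_monomial_Y]

include hlin hclean in
lemma phi_dY_self : aeval (v α) (pderiv (Sum.inr α) P) = Polynomial.X := by
  rw [phi_pderiv]
  have hsub : ({mu α} : Finset ((Fin n ⊕ Fin n) →₀ ℕ)) ⊆ P.support := by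
    simpa using memmu hlin α
  have hvan : ∀ m ∈ P.support, m ∉ ({mu α} : Finset ((Fin n ⊕ Fin n) →₀ ℕ)) →
      aeval (v α) (monomial (m - Finsupp.single (Sum.inr α) 1)
        (coeff m P * (m (Sum.inr α) : ℂ))) = 0 := by
    intro m hm hne
    rw [Finset.mem_singleton] at hne
    by_cases h1 : m (Sum.inr α) = 0
    · rw [h1, Nat.cast_zero, mul_zero, monomial_zero, map_zero]
    · apply phi_monomial_zero
      intro hsub'
      have hsupp : m.support ⊆ ({Sum.inl α, Sum.inr α} : Finset (Fin n ⊕ Fin n)) := by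
        refine (support_subset_insert m (Sum.inr α)).trans ?_
        exact Finset.insert_subset (by simp) hsub'
      rcases key1 hclean hm hsupp with rfl | rfl
      · exact h1 rfl
      · exact hne rfl
  rw [← Finset.sum_subset hsub hvan, Finset.sum_singleton,
    show coeff (mu α) P = 1 from hlin α,
    show mu α - Finsupp.single (Sum.inr α) 1 = Finsupp.single (Sum.inl α) 1 from
      add_tsub_cancel_right _ _,
    show mu α (Sum.inr α) = 1 by rw [mu_inr, if_pos rfl],
    Nat.cast_one, mul_one, phi_monomial_X]


include hbal in
lemma phi_d2_offdiag {β γ : Fin n} (h : β ≠ γ) :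
    aeval (v α) (pderiv (Sum.inl β) (pderiv (Sum.inr γ) P)) = 0 := by
  rw [phi_pderiv2]
  refine Finset.sum_eq_zero fun m hm => ?_
  by_cases h1 : m (Sum.inr γ) = 0
  · rw [h1, Nat.cast_zero, mul_zero, zero_mul, monomial_zero, map_zero]
  by_cases h2 : m (Sum.inl β) = 0
  · rw [sub_single_apply_ne m (by simp), h2, Nat.cast_zero, mul_zero, monomial_zero,
      map_zero]
  apply phi_monomial_zero
  intro hsub'
  have hsupp := support_chain (α := α) hsub'
  have e1 : Sum.inr β ∈ m.support :=
    Finsupp.mem_support_iff.mpr (by rw [← hbal m hm β]; exact h2)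
  have e2 : Sum.inl γ ∈ m.support :=
    Finsupp.mem_support_iff.mpr (by rw [hbal m hm γ]; exact h1)
  have f1 := hsupp e1
  have f2 := hsupp e2
  simp only [Finset.mem_insert, Finset.mem_singleton, Sum.inr.injEq, Sum.inl.injEq,
    reduceCtorEq, false_or, or_false] at f1 f2
  rcases f1 with h4 | h4 <;> rcases f2 with h5 | h5
  · exact h h4
  · exact h h4
  · exact h h5.symm
  · exact h (h4.trans h5.symm)

include hbal hlin hclean in
lemma phi_d2_diag_ne {β : Fin n} (hβ : β ≠ α) :
    aeval (v α) (pderiv (Sum.inl β) (pderiv (Sum.inr β) P)) = 1 := by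
  rw [phi_pderiv2]
  have hsub : ({mu β} : Finset ((Fin n ⊕ Fin n) →₀ ℕ)) ⊆ P.support := by
    simpa using memmu hlin β
  have hvan : ∀ m ∈ P.support, m ∉ ({mu β} : Finset ((Fin n ⊕ Fin n) →₀ ℕ)) →
      aeval (v α) (monomial (m - Finsupp.single (Sum.inr β) 1 - Finsupp.single (Sum.inl β) 1)
        ((coeff m P * (m (Sum.inr β) : ℂ)) *
          ((m - Finsupp.single (Sum.inr β) 1 : (Fin n ⊕ Fin n) →₀ ℕ) (Sum.inl β) : ℂ))) = 0 := by
    intro m hm hne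
    rw [Finset.mem_singleton] at hne
    by_cases h1 : m (Sum.inr β) = 0
    · rw [h1, Nat.cast_zero, mul_zero, zero_mul, monomial_zero, map_zero]
    by_cases h2 : m (Sum.inl β) = 0
    · rw [sub_single_apply_ne m (by simp), h2, Nat.cast_zero, mul_zero, monomial_zero,
        map_zero]
    apply phi_monomial_zero
    intro hsub'
    have hsupp := support_chain (α := α) hsub'
    have r1 : m (Sum.inl β) = 1 := by
      have hz : (m - Finsupp.single (Sum.inr β) 1 - Finsupp.single (Sum.inl β) 1 :
          (Fin n ⊕ Fin n) →₀ ℕ) (Sum.inl β) = 0 := by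
        by_contra hc
        have := hsub' (Finsupp.mem_support_iff.mpr hc)
        simp only [Finset.mem_insert, Finset.mem_singleton, Sum.inl.injEq, reduceCtorEq,
          or_false] at this
        exact hβ this
      rw [Finsupp.tsub_apply, sub_single_apply_ne m (by simp),
        Finsupp.single_apply, if_pos rfl] at hz
      omega
    have r2 : m (Sum.inr β) = 1 := by
      have hz : (m - Finsupp.single (Sum.inr β) 1 - Finsupp.single (Sum.inl β) 1 :
          (Fin n ⊕ Fin n) →₀ ℕ) (Sum.inr β) = 0 := by
        by_contra hc
        have := hsub' (Finsupp.mem_support_iff.mpr hc)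
        simp only [Finset.mem_insert, Finset.mem_singleton, Sum.inr.injEq, reduceCtorEq,
          false_or] at this
        exact hβ this
      rw [sub_single_apply_ne _ (by simp), Finsupp.tsub_apply, Finsupp.single_apply,
        if_pos rfl] at hz
      omega
    by_cases hα0 : m (Sum.inl α) = 0
    · have hαr : m (Sum.inr α) = 0 := by rw [← hbal m hm α]; exact hα0
      apply hne
      ext i
      by_cases hi : i ∈ m.support
      · have := hsupp hi
        simp only [Finset.mem_insert, Finset.mem_singleton] at this
        rcases this with rfl | rfl | rfl | rfl
        · rw [r2, mu_inr, if_pos rfl]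
        · rw [r1, mu_inl, if_pos rfl]
        · exact absurd hα0 (Finsupp.mem_support_iff.mp hi)
        · exact absurd hαr (Finsupp.mem_support_iff.mp hi)
      · rw [Finsupp.notMem_support_iff.mp hi]
        refine (mu_apply_eq_zero ?_ ?_).symm
        · rintro rfl; exact hi (Finsupp.mem_support_iff.mpr h2)
        · rintro rfl; exact hi (Finsupp.mem_support_iff.mpr h1)
    · have hmα : Sum.inl α ∈ m.support := Finsupp.mem_support_iff.mpr hα0
      have hidx : α ∈ idx m := Finset.mem_image.mpr ⟨_, hmα, rfl⟩
      have hidx2 : idx m ⊆ {α, β} := by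
        intro γ hγ
        obtain ⟨i, hi, rfl⟩ := Finset.mem_image.mp hγ
        have := hsupp hi
        simp only [Finset.mem_insert, Finset.mem_singleton] at this ⊢
        rcases this with rfl | rfl | rfl | rfl <;> simp [proj]
      have hcard : (idx m).card ≤ 2 := by
        refine (Finset.card_le_card hidx2).trans ?_
        refine (Finset.card_insert_le _ _).trans ?_
        simp
      have := hclean m hm hidx hcard
      rw [this, mu_inl, if_neg (Ne.symm hβ)] at r1
      exact one_ne_zero r1.symm
  rw [← Finset.sum_subset hsub hvan, Finset.sum_singleton,
    show coeff (mu β) P = 1 from hlin β,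
    show mu β - Finsupp.single (Sum.inr β) 1 = Finsupp.single (Sum.inl β) 1 from
      add_tsub_cancel_right _ _,
    tsub_self,
    show mu β (Sum.inr β) = 1 by rw [mu_inr, if_pos rfl],
    show (Finsupp.single (Sum.inl β) 1 : (Fin n ⊕ Fin n) →₀ ℕ) (Sum.inl β) = 1 from
      Finsupp.single_eq_same,
    Nat.cast_one, mul_one, one_mul, phi_monomial_C, Polynomial.C_1]

include hlin hclean in
lemma phi_d2_diag_self :
    aeval (v α) (pderiv (Sum.inl α) (pderiv (Sum.inr α) P)) = 1 := by
  rw [phi_pderiv2]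
  have hsub : ({mu α} : Finset ((Fin n ⊕ Fin n) →₀ ℕ)) ⊆ P.support := by
    simpa using memmu hlin α
  have hvan : ∀ m ∈ P.support, m ∉ ({mu α} : Finset ((Fin n ⊕ Fin n) →₀ ℕ)) →
      aeval (v α) (monomial (m - Finsupp.single (Sum.inr α) 1 - Finsupp.single (Sum.inl α) 1)
        ((coeff m P * (m (Sum.inr α) : ℂ)) *
          ((m - Finsupp.single (Sum.inr α) 1 : (Fin n ⊕ Fin n) →₀ ℕ) (Sum.inl α) : ℂ))) = 0 := by
    intro m hm hne
    rw [Finset.mem_singleton] at hne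
    by_cases h1 : m (Sum.inr α) = 0
    · rw [h1, Nat.cast_zero, mul_zero, zero_mul, monomial_zero, map_zero]
    by_cases h2 : m (Sum.inl α) = 0
    · rw [sub_single_apply_ne m (by simp), h2, Nat.cast_zero, mul_zero, monomial_zero,
        map_zero]
    apply phi_monomial_zero
    intro hsub'
    have hsupp' := support_chain (α := α) hsub'
    have hsupp : m.support ⊆ ({Sum.inl α, Sum.inr α} : Finset (Fin n ⊕ Fin n)) := by
      intro x hx
      have := hsupp' hx
      simp only [Finset.mem_insert, Finset.mem_singleton] at this ⊢
      tauto
    rcases key1 hclean hm hsupp with rfl | rfl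
    · exact h1 rfl
    · exact hne rfl
  rw [← Finset.sum_subset hsub hvan, Finset.sum_singleton,
    show coeff (mu α) P = 1 from hlin α,
    show mu α - Finsupp.single (Sum.inr α) 1 = Finsupp.single (Sum.inl α) 1 from
      add_tsub_cancel_right _ _,
    tsub_self,
    show mu α (Sum.inr α) = 1 by rw [mu_inr, if_pos rfl],
    show (Finsupp.single (Sum.inl α) 1 : (Fin n ⊕ Fin n) →₀ ℕ) (Sum.inl α) = 1 from
      Finsupp.single_eq_same,
    Nat.cast_one, mul_one, one_mul, phi_monomial_C, Polynomial.C_1]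


include hbal hconst hlin hclean in
lemma phi_mapMatrix :
    (metricMatrix n P).map (aeval (v α)) =
      Matrix.diagonal (fun β => if β = α then 1 else 1 + Polynomial.X ^ 2) := by
  refine Matrix.ext fun β γ => ?_
  rw [Matrix.map_apply, Matrix.diagonal_apply]
  show aeval (v α) (P * pderiv (Sum.inl β) (pderiv (Sum.inr γ) P)
      - pderiv (Sum.inl β) P * pderiv (Sum.inr γ) P) = _
  rw [map_sub, map_mul, map_mul]
  by_cases hβγ : β = γ
  · subst hβγ
    by_cases hβ : β = α
    · subst hβ
      rw [if_pos rfl, if_pos rfl, phiP hconst hlin hclean, phi_d2_diag_self hlin hclean,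
        phi_dX_self hlin hclean, phi_dY_self hlin hclean]
      ring
    · rw [if_pos rfl, if_neg hβ, phiP hconst hlin hclean, phi_d2_diag_ne hbal hlin hclean hβ,
        phi_dX_ne hbal hβ, phi_dY_ne hbal hβ]
      ring
  · rw [if_neg hβγ, phi_d2_offdiag hbal hβγ, mul_zero, zero_sub, neg_eq_zero]
    by_cases hβ : β = α
    · have hγ : γ ≠ α := fun h => hβγ (hβ.trans h.symm)
      rw [phi_dY_ne hbal hγ, mul_zero]
    · rw [phi_dX_ne hbal hβ, zero_mul]

include hbal hconst hlin hclean in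
lemma phi_det :
    aeval (v α) (Matrix.det (metricMatrix n P)) = (1 + Polynomial.X ^ 2) ^ (n - 1) := by
  rw [AlgHom.map_det, AlgHom.mapMatrix_apply, phi_mapMatrix hbal hconst hlin hclean,
    Matrix.det_diagonal, ← Finset.mul_prod_erase Finset.univ _ (Finset.mem_univ α),
    if_pos rfl, one_mul,
    Finset.prod_congr rfl (fun β hβ => if_neg (Finset.ne_of_mem_erase hβ)),
    Finset.prod_const, Finset.card_erase_of_mem (Finset.mem_univ α), Finset.card_univ,
    Fintype.card_fin]

end main
end LCE

theorem low_codimension_einstein_constant (n k r s : ℕ)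
    (hn : 0 < n) (hk : 0 < k) (hr : 0 < r) (hs : 0 < s) (hnk : 2 * k < n)
    (P : MvPolynomial (Fin n ⊕ Fin n) ℂ)
    (hbal : IsBalanced n P)
    (hconst : coeff 0 P = 1)
    (hlin : ∀ α : Fin n,
      coeff (Finsupp.single (Sum.inl α) 1 + Finsupp.single (Sum.inr α) 1) P = 1)
    (hsupp : P.support.card ≤ n + k + 1)
    (hMA : (Matrix.det (metricMatrix n P)) ^ s = P ^ r) :
    r = (n - 1) * s ∧ (2 * (2 * (n : ℚ) - (r : ℚ) / (s : ℚ)) = 2 * ((n : ℚ) + 1)) := by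
  classical
  obtain ⟨α, hclean⟩ : ∃ α : Fin n, ∀ m ∈ P.support,
      α ∈ LCE.idx m → (LCE.idx m).card ≤ 2 → m = LCE.mu α := by
    set T := P.support with hT
    set Triv : Finset ((Fin n ⊕ Fin n) →₀ ℕ) :=
      insert 0 (Finset.image LCE.mu Finset.univ) with hTriv
    have hTsub : Triv ⊆ T := by
      intro m hm
      rcases Finset.mem_insert.mp hm with rfl | hm2
      · exact LCE.mem0 hconst
      · obtain ⟨β, _, rfl⟩ := Finset.mem_image.mp hm2
        exact LCE.memmu hlin β
    have hTrivcard : Triv.card = n + 1 := by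
      rw [hTriv, Finset.card_insert_of_notMem, Finset.card_image_of_injective _
        LCE.mu_injective, Finset.card_univ, Fintype.card_fin]
      intro hc
      obtain ⟨β, _, hβ⟩ := Finset.mem_image.mp hc
      exact LCE.mu_ne_zero β hβ
    set Bad : Finset (Fin n) :=
      (T \ Triv).biUnion (fun m => if (LCE.idx m).card ≤ 2 then LCE.idx m else ∅) with hBad
    have hBadcard : Bad.card ≤ 2 * k := by
      calc Bad.card ≤ ∑ m ∈ T \ Triv, (if (LCE.idx m).card ≤ 2 then LCE.idx m else ∅).card :=
            Finset.card_biUnion_le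
        _ ≤ ∑ _m ∈ T \ Triv, 2 := Finset.sum_le_sum (fun m _ => by split <;> simp_all)
        _ = (T \ Triv).card * 2 := by rw [Finset.sum_const, smul_eq_mul]
        _ ≤ 2 * k := by
            have h1 : (T \ Triv).card = T.card - Triv.card := Finset.card_sdiff_of_subset hTsub
            have h3 : Triv.card ≤ T.card := Finset.card_le_card hTsub
            omega
    obtain ⟨α, hα⟩ : ∃ α : Fin n, α ∉ Bad := by
      by_contra hc
      push_neg at hc
      have hBn : (Finset.univ : Finset (Fin n)).card ≤ Bad.card :=
        Finset.card_le_card (fun x _ => hc x)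
      rw [Finset.card_univ, Fintype.card_fin] at hBn
      omega
    refine ⟨α, fun m hm hαm hcard => ?_⟩
    by_cases hTrivm : m ∈ Triv
    · rcases Finset.mem_insert.mp hTrivm with rfl | hm2
      · simp [LCE.idx] at hαm
      · obtain ⟨β, _, rfl⟩ := Finset.mem_image.mp hm2
        obtain ⟨i, hi, hpi⟩ := Finset.mem_image.mp hαm
        have hαβ : α = β := by
          rcases LCE.mem_support_mu (Finsupp.mem_support_iff.mp hi) with rfl | rfl
          · rw [← hpi]; rfl
          · rw [← hpi]; rfl
        rw [hαβ]
    · exfalso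
      apply hα
      rw [hBad]
      refine Finset.mem_biUnion.mpr ⟨m, Finset.mem_sdiff.mpr ⟨hm, hTrivm⟩, ?_⟩
      rw [if_pos hcard]
      exact hαm
  have hkey := congrArg (aeval (LCE.v α)) hMA
  rw [map_pow, map_pow, LCE.phi_det hbal hconst hlin hclean,
    LCE.phiP hconst hlin hclean, ← pow_mul] at hkey
  have hdeg := congrArg Polynomial.natDegree hkey
  rw [Polynomial.natDegree_pow, Polynomial.natDegree_pow] at hdeg
  have hX : (1 + Polynomial.X ^ 2 : Polynomial ℂ).natDegree = 2 := by
    rw [add_comm, ← Polynomial.C_1, Polynomial.natDegree_X_pow_add_C]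
  rw [hX] at hdeg
  have hrs : r = (n - 1) * s := by omega
  refine ⟨hrs, ?_⟩
  have hs' : (s : ℚ) ≠ 0 := Nat.cast_ne_zero.mpr hs.ne'
  have h1n : (1 : ℕ) ≤ n := hn
  rw [hrs]
  push_cast [Nat.cast_sub h1n]
  field_simp
  ring
end
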